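/- arXiv:math/0502217 — 7 statements merged into one kernel-verified Lean document; each statement's English description precedes it below -/
import Mathlib

section
/- Let I be an infinite index set, 1 ≤ p ≤ q ≤ ∞, and v, w positive weight functions on I. The embedding ℓ^p_w(I) → ℓ^q_v(I) is compact if and only if the sequence (v(i)/w(i))_{i ∈ I} belongs to c₀(I), i.e., for every ε > 0 the set {i : v(i)/w(i) ≥ ε} is finite. -/
/-! With `c i = v i / w i`, the embedding is the diagonal operator `f ↦ (c i * f i)_i` from `ℓ^p`
to `ℓ^q`. If `c` vanishes at infinity, its truncations to finite sets give finite-rank diagonal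
operators converging to it in operator norm, because `‖g‖_q ≤ ‖g‖_p` for `p ≤ q`. Conversely, the
images of the unit vectors `e i` with `ε ≤ ‖c i‖` are pairwise `ε`-separated, and a compact image
of the unit ball contains only finitely many such points. -/

open ENNReal Filter

theorem TotallyBounded.finite_of_pairwise_le_dist {X ι : Type*} [PseudoMetricSpace X] {s : Set X}
    (hs : TotallyBounded s) {ε : ℝ} (hε : 0 < ε) {S : Set ι} {f : ι → X}
    (hfs : ∀ i ∈ S, f i ∈ s) (hf : S.Pairwise fun i j ↦ ε ≤ dist (f i) (f j)) : S.Finite := by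
  obtain ⟨t, ht, hst⟩ := Metric.totallyBounded_iff.mp hs (ε / 2) (half_pos hε)
  have hnear (i : S) : ∃ y : t, dist (f i) y < ε / 2 := by
    obtain ⟨y, hy, hiy⟩ := Set.mem_iUnion₂.mp (hst (hfs i i.2))
    exact ⟨⟨y, hy⟩, hiy⟩
  choose g hg using hnear
  have hg_inj : Function.Injective g := fun i j hij ↦ Subtype.ext <| by_contra fun hne ↦ by
    have hi := hg i
    rw [hij] at hi
    linarith [hf i.2 j.2 hne, hg j, dist_triangle_right (f i) (f j) (g j)]
  have := ht.to_subtype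
  exact Set.finite_coe_iff.mp (Finite.of_injective g hg_inj)

namespace lp

variable {α : Type*} {E F : α → Type*} [∀ i, NormedAddCommGroup (E i)]
  [∀ i, NormedAddCommGroup (F i)]

theorem norm_le_mul_norm_of_exponent_le {p q : ℝ≥0∞} (hp : p ≠ 0) (hpq : p ≤ q)
    {x : lp E q} {y : lp F p} {C : ℝ} (hC : 0 ≤ C) (h : ∀ i, ‖x i‖ ≤ C * ‖y i‖) :
    ‖x‖ ≤ C * ‖y‖ := by
  obtain rfl | hq := eq_or_ne q ∞
  · exact norm_le_of_forall_le (mul_nonneg hC (norm_nonneg' y)) fun i ↦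
      (h i).trans <| by gcongr; exact norm_apply_le_norm hp y i
  have hp₀ : 0 < p.toReal := toReal_pos hp (ne_top_of_le_ne_top hq hpq)
  have hpq' : p.toReal ≤ q.toReal := toReal_mono hq hpq
  have hq₀ : 0 < q.toReal := hp₀.trans_le hpq'
  set r := q.toReal - p.toReal
  have hy (i : α) : ‖y i‖ ^ q.toReal ≤ ‖y i‖ ^ p.toReal * ‖y‖ ^ r := by
    rw [← add_sub_cancel p.toReal q.toReal, Real.rpow_add' (norm_nonneg _) (by linarith)]
    gcongr
    exact norm_apply_le_norm hp y i
  refine norm_le_of_forall_sum_le hq₀ (mul_nonneg hC (norm_nonneg' y)) fun s ↦ ?_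
  calc ∑ i ∈ s, ‖x i‖ ^ q.toReal
      ≤ ∑ i ∈ s, C ^ q.toReal * (‖y i‖ ^ p.toReal * ‖y‖ ^ r) := by
        gcongr with i
        grw [h i, Real.mul_rpow hC (norm_nonneg _), hy i]
    _ = C ^ q.toReal * ‖y‖ ^ r * ∑ i ∈ s, ‖y i‖ ^ p.toReal := by
        rw [Finset.mul_sum]; congr! 1 with i; ring
    _ ≤ C ^ q.toReal * ‖y‖ ^ r * ‖y‖ ^ p.toReal := by
        have : 0 ≤ C ^ q.toReal * ‖y‖ ^ r :=
          mul_nonneg (Real.rpow_nonneg hC _) (Real.rpow_nonneg (norm_nonneg' y) _)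
        grw [sum_rpow_le_norm_rpow hp₀ y s]
    _ = (C * ‖y‖) ^ q.toReal := by
        rw [mul_assoc, ← Real.rpow_add' (norm_nonneg' _) (by linarith), sub_add_cancel,
          Real.mul_rpow hC (norm_nonneg' _)]

variable {𝕜 : Type*} [NontriviallyNormedField 𝕜] {p q : ℝ≥0∞} [Fact (1 ≤ p)] [Fact (1 ≤ q)]

noncomputable def diagonal (hpq : p ≤ q) (c : α → 𝕜) (hc : BddAbove (Set.range fun i ↦ ‖c i‖)) :
    lp (fun _ : α ↦ 𝕜) p →L[𝕜] lp (fun _ : α ↦ 𝕜) q :=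
  have hcf (f : lp (fun _ : α ↦ 𝕜) p) (i : α) : ‖c i * f i‖ ≤ (⨆ j, ‖c j‖) * ‖f i‖ := by
    rw [norm_mul]; gcongr; exact le_ciSup hc i
  LinearMap.mkContinuous
    { toFun f := ⟨fun i ↦ c i * f i,
        (((lp.memℓp f).of_exponent_ge hpq).norm.const_mul _).mono (hcf f)⟩
      map_add' f g := by ext i; exact mul_add ..
      map_smul' a f := by ext i; exact mul_left_comm .. }
    (⨆ i, ‖c i‖) fun f ↦ norm_le_mul_norm_of_exponent_le (zero_lt_one.trans_le Fact.out).ne' hpq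
      (Real.iSup_nonneg fun i ↦ norm_nonneg _) (hcf f)

theorem diagonal_apply (hpq : p ≤ q) (c : α → 𝕜) (hc : BddAbove (Set.range fun i ↦ ‖c i‖))
    (f : lp (fun _ : α ↦ 𝕜) p) (i : α) : diagonal hpq c hc f i = c i * f i :=
  rfl

theorem finite_setOf_le_norm_of_isCompactOperator
    {T : lp (fun _ : α ↦ 𝕜) p →L[𝕜] lp (fun _ : α ↦ 𝕜) q} (hT : IsCompactOperator T)
    {c : α → 𝕜} (hTc : ∀ f i, T f i = c i * f i) {ε : ℝ} (hε : 0 < ε) :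
    {i | ε ≤ ‖c i‖}.Finite := by
  classical
  obtain ⟨K, hK, hTK⟩ := hT.image_closedBall_subset_compact 1
  let e (i : α) : lp (fun _ : α ↦ 𝕜) p := lp.single p i 1
  refine hK.totallyBounded.finite_of_pairwise_le_dist hε (f := fun i ↦ T (e i))
    (fun i _ ↦ hTK ⟨e i, ?_, rfl⟩) fun i hi j _ hij ↦ ?_
  · simp [e, lp.norm_single (zero_lt_one.trans_le Fact.out)]
  · calc ε ≤ ‖c i‖ := hi
      _ = ‖(T (e i) - T (e j)) i‖ := by simp [hTc, e, lp.single_apply, hij]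
      _ ≤ dist (T (e i)) (T (e j)) :=
        dist_eq_norm (T (e i)) _ ▸ norm_apply_le_norm (zero_lt_one.trans_le Fact.out).ne' _ i

variable [DecidableEq α]

variable (p q) in
noncomputable def finiteDiagonal (c : α → 𝕜) (s : Finset α) :
    lp (fun _ : α ↦ 𝕜) p →L[𝕜] lp (fun _ : α ↦ 𝕜) q :=
  ∑ i ∈ s, c i • (singleContinuousLinearMap 𝕜 (fun _ ↦ 𝕜) q i).comp (evalCLM 𝕜 (fun _ ↦ 𝕜) p i)

theorem finiteDiagonal_apply (c : α → 𝕜) (s : Finset α) (f : lp (fun _ : α ↦ 𝕜) p) (j : α) :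
    finiteDiagonal p q c s f j = if j ∈ s then c j * f j else 0 := by
  have heval (i : α) : evalCLM 𝕜 (fun _ ↦ 𝕜) p i f = f i := rfl
  rw [finiteDiagonal, sum_apply, coeFn_sum, Finset.sum_apply]
  simp [heval, lp.single_apply, Pi.single_apply]

theorem isCompactOperator_finiteDiagonal [LocallyCompactSpace 𝕜] (c : α → 𝕜) (s : Finset α) :
    IsCompactOperator (finiteDiagonal p q c s) :=
  Submodule.sum_mem (compactOperator (RingHom.id 𝕜) _ _) fun i _ ↦ Submodule.smul_mem _ _ <| by
    exact (isCompactOperator_of_locallyCompactSpace_dom (evalCLM 𝕜 (fun _ ↦ 𝕜) p i)).clm_comp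
      (singleContinuousLinearMap 𝕜 (fun _ ↦ 𝕜) q i)

theorem norm_finiteDiagonal_sub_le (hpq : p ≤ q)
    {T : lp (fun _ : α ↦ 𝕜) p →L[𝕜] lp (fun _ : α ↦ 𝕜) q} {c : α → 𝕜}
    (hTc : ∀ f i, T f i = c i * f i) {s : Finset α} {ε : ℝ} (hε : 0 ≤ ε)
    (hs : ∀ i ∉ s, ‖c i‖ ≤ ε) : ‖finiteDiagonal p q c s - T‖ ≤ ε :=
  ContinuousLinearMap.opNorm_le_bound _ hε fun f ↦
    norm_le_mul_norm_of_exponent_le (zero_lt_one.trans_le Fact.out).ne' hpq hε fun j ↦ by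
      rw [sub_apply, coeFn_sub, Pi.sub_apply, finiteDiagonal_apply, hTc]
      split_ifs with hj
      · rw [sub_self, _root_.norm_zero]
        positivity
      · rw [zero_sub, _root_.norm_neg, norm_mul]
        gcongr
        exact hs j hj

theorem isCompactOperator_of_finite_setOf_le_norm [LocallyCompactSpace 𝕜] [CompleteSpace 𝕜]
    (hpq : p ≤ q)
    {T : lp (fun _ : α ↦ 𝕜) p →L[𝕜] lp (fun _ : α ↦ 𝕜) q} {c : α → 𝕜}
    (hTc : ∀ f i, T f i = c i * f i) (hc : ∀ ε > 0, {i | ε ≤ ‖c i‖}.Finite) :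
    IsCompactOperator T := by
  refine isCompactOperator_of_tendsto (F := finiteDiagonal p q c) (l := atTop) ?_
    (Eventually.of_forall fun s ↦ isCompactOperator_finiteDiagonal c s)
  refine Metric.tendsto_atTop.mpr fun ε hε ↦ ⟨(hc (ε / 2) (half_pos hε)).toFinset, fun s hs ↦ ?_⟩
  rw [dist_eq_norm]
  refine (norm_finiteDiagonal_sub_le hpq hTc (half_pos hε).le fun i hi ↦ ?_).trans_lt
    (half_lt_self hε)
  by_contra! h
  exact hi (hs (by simpa using h.le))

end lp

theorem weighted_lp_embedding_compact_iff_c0_general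
    {I : Type*} (p q : ℝ≥0∞) [Fact (1 ≤ p)] [Fact (1 ≤ q)] (hpq : p ≤ q)
    (w v : I → ℝ) (hw : ∀ i, 0 < w i) (hv : ∀ i, 0 < v i) :
    (∃ T : lp (fun _ : I => ℂ) p →L[ℂ] lp (fun _ : I => ℂ) q,
      (∀ (f : lp (fun _ : I => ℂ) p) (i : I), (T f : ∀ _ : I, ℂ) i = (v i / w i : ℝ) * f i) ∧
      IsCompactOperator T)
    ↔ (∀ ε : ℝ, 0 < ε → {i : I | ε ≤ v i / w i}.Finite) := by
  classical
  set c : I → ℂ := fun i ↦ ((v i / w i : ℝ) : ℂ)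
  have hc (i : I) : ‖c i‖ = v i / w i := by
    simp [c, abs_of_pos (hv i), abs_of_pos (hw i)]
  have hset (ε : ℝ) : {i | ε ≤ v i / w i} = {i | ε ≤ ‖c i‖} := by simp only [hc]
  simp only [hset]
  refine ⟨fun ⟨T, hTc, hT⟩ ε hε ↦ lp.finite_setOf_le_norm_of_isCompactOperator hT hTc hε,
    fun h ↦ ?_⟩
  have hbdd : BddAbove (Set.range fun i ↦ ‖c i‖) :=
    (isBoundedUnder_of_eventually_le (eventually_cofinite.mpr
      ((h 1 one_pos).subset fun i hi ↦ (not_le.mp hi).le))).bddAbove_range_of_cofinite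
  exact ⟨lp.diagonal hpq c hbdd, lp.diagonal_apply hpq c hbdd,
    lp.isCompactOperator_of_finite_setOf_le_norm hpq (fun f i ↦ rfl) h⟩

/-- For an infinite index set `I`, `1 ≤ p ≤ q ≤ ∞` and positive weights
`v, w` on `I`, the embedding `ℓ^p_w(I) ↪ ℓ^q_v(I)` is compact if and only if
`(v i / w i)_i ∈ c₀(I)`, i.e. for every `ε > 0` the set `{i | v i / w i ≥ ε}` is finite.
Via the isometric identifications `ℓ^p_w ≅ ℓ^p` (multiplication by `w`) and
`ℓ^q_v ≅ ℓ^q` (multiplication by `v`), the embedding is the diagonal operator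
`ℓ^p → ℓ^q`, `f ↦ ((v i / w i) * f i)_i`; its compactness is the formalized condition. -/
theorem weighted_lp_embedding_compact_iff_c0
    {I : Type*} [Infinite I] (p q : ℝ≥0∞) [Fact (1 ≤ p)] [Fact (1 ≤ q)] (hp : 1 ≤ p) (hpq : p ≤ q)
    (w v : I → ℝ) (hw : ∀ i, 0 < w i) (hv : ∀ i, 0 < v i) :
    (∃ T : lp (fun _ : I => ℂ) p →L[ℂ] lp (fun _ : I => ℂ) q,
      (∀ (f : lp (fun _ : I => ℂ) p) (i : I), (T f : ∀ _ : I, ℂ) i = (v i / w i : ℝ) * f i) ∧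
      IsCompactOperator T)
    ↔ (∀ ε : ℝ, 0 < ε → {i : I | ε ≤ v i / w i}.Finite) :=
  weighted_lp_embedding_compact_iff_c0_general p q hpq w v hw hv
end

section
/- Let b = (b_k)_{k ∈ ℕ, k ≥ 1} be a non-increasing sequence of positive real numbers. For 0 < p < q ≤ ∞ set α = 1/p − 1/q and σ_{n,q}(b) = (∑_{k=n}^∞ b_k^q)^{1/q} (with the sup interpretation for q = ∞). Then 2^{-1/p} ‖b‖_{ℓ^p} ≤ (∑_{n=1}^∞ (n^α σ_{n,q}(b))^p / n)^{1/p}, i.e., the weighted sum of tail q-norms dominates the ℓ^p norm of b up to the factor 2^{-1/p}. -/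
/-!
Each term `b_{2n+1}^p` is controlled by the `n`-th term of the right-hand side: the tail
`b_{n+1}, …, b_{2n+1}` consists of `n + 1` entries all at least `b_{2n+1}`, so
`σ_{n+1,q}(b) ≥ (n+1)^{1/q} b_{2n+1}`, whence `b_{2n+1}^p ≤ ((n+1)^α σ_{n+1,q}(b))^p / (n+1)`.
Monotonicity also bounds the odd-indexed terms of `‖b‖_p^p` by the even-indexed ones, so
`‖b‖_p^p ≤ 2 ∑_n b_{2n+1}^p`, which accounts for the factor `2^{-1/p}`.
-/

open ENNReal

namespace ENNReal

noncomputable def lqNorm (q : ℝ≥0∞) (a : ℕ → ℝ≥0∞) : ℝ≥0∞ :=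
  if q = ∞ then ⨆ j, a j else (∑' j, a j ^ q.toReal) ^ (1 / q.toReal)

variable {a : ℕ → ℝ≥0∞}

theorem succ_mul_le_tsum_of_antitone (ha : Antitone a) (m : ℕ) :
    ((m : ℝ≥0∞) + 1) * a m ≤ ∑' j, a j :=
  calc ((m : ℝ≥0∞) + 1) * a m = ∑ _j ∈ Finset.range (m + 1), a m := by simp
    _ ≤ ∑ j ∈ Finset.range (m + 1), a j :=
      Finset.sum_le_sum fun j hj => ha (Nat.lt_succ_iff.mp (Finset.mem_range.mp hj))
    _ ≤ ∑' j, a j := ENNReal.sum_le_tsum _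

theorem succ_rpow_mul_le_lqNorm_of_antitone (ha : Antitone a) {q : ℝ≥0∞} (hq : q ≠ 0)
    (m : ℕ) : ((m : ℝ≥0∞) + 1) ^ (1 / q.toReal) * a m ≤ lqNorm q a := by
  unfold lqNorm
  split_ifs with hq_top
  · simpa [hq_top] using le_iSup a m
  have hr : 0 < q.toReal := ENNReal.toReal_pos hq hq_top
  have hsum : ((m : ℝ≥0∞) + 1) * a m ^ q.toReal ≤ ∑' j, a j ^ q.toReal :=
    succ_mul_le_tsum_of_antitone (fun i j hij => ENNReal.rpow_le_rpow (ha hij) hr.le) m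
  calc ((m : ℝ≥0∞) + 1) ^ (1 / q.toReal) * a m
      = (((m : ℝ≥0∞) + 1) * a m ^ q.toReal) ^ (1 / q.toReal) := by
        rw [ENNReal.mul_rpow_of_nonneg _ _ (by positivity), ← ENNReal.rpow_mul,
          mul_one_div_cancel hr.ne', ENNReal.rpow_one]
    _ ≤ (∑' j, a j ^ q.toReal) ^ (1 / q.toReal) := ENNReal.rpow_le_rpow hsum (by positivity)

theorem tsum_le_two_mul_tsum_even_of_antitone (ha : Antitone a) :
    ∑' k, a k ≤ 2 * ∑' n, a (2 * n) := by
  rw [← tsum_even_add_odd ENNReal.summable ENNReal.summable, two_mul]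
  exact add_le_add le_rfl (ENNReal.tsum_le_tsum fun n => ha (Nat.le_succ _))

theorem two_rpow_neg_mul_tsum_rpow_le_of_antitone (ha : Antitone a) {p : ℝ} (hp : 0 < p) :
    2 ^ (-(1 / p)) * (∑' k, a k ^ p) ^ (1 / p) ≤ (∑' n, a (2 * n) ^ p) ^ (1 / p) := by
  have hsplit : ∑' k, a k ^ p ≤ 2 * ∑' n, a (2 * n) ^ p :=
    tsum_le_two_mul_tsum_even_of_antitone fun i j hij => ENNReal.rpow_le_rpow (ha hij) hp.le
  calc 2 ^ (-(1 / p)) * (∑' k, a k ^ p) ^ (1 / p)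
      ≤ 2 ^ (-(1 / p)) * (2 * ∑' n, a (2 * n) ^ p) ^ (1 / p) := by
        gcongr
    _ = (∑' n, a (2 * n) ^ p) ^ (1 / p) := by
        rw [ENNReal.mul_rpow_of_nonneg _ _ (by positivity), ← mul_assoc,
          ← ENNReal.rpow_add _ _ (by norm_num) (by norm_num)]
        norm_num

theorem rpow_le_div_of_rpow_inv_mul_le {N c d : ℝ≥0∞} (hN₀ : N ≠ 0) (hN : N ≠ ∞) {p : ℝ}
    (hp : 0 < p) (h : N ^ (1 / p) * c ≤ d) : c ^ p ≤ d ^ p / N :=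
  calc c ^ p = (N ^ (1 / p) * c) ^ p / N := by
        rw [ENNReal.mul_rpow_of_nonneg _ _ hp.le, ← ENNReal.rpow_mul, one_div_mul_cancel hp.ne',
          ENNReal.rpow_one, mul_div_assoc, ENNReal.mul_div_cancel' (absurd · hN₀) (absurd · hN)]
    _ ≤ d ^ p / N := by gcongr

theorem rpow_le_weighted_lqNorm_tail (ha : Antitone a) {p : ℝ} (hp : 0 < p) {q : ℝ≥0∞}
    (hq : q ≠ 0) (n : ℕ) :
    a (2 * n) ^ p ≤
      (((n : ℝ≥0∞) + 1) ^ (1 / p - 1 / q.toReal) * lqNorm q (fun j => a (n + j))) ^ p /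
        ((n : ℝ≥0∞) + 1) := by
  have hN₀ : (n : ℝ≥0∞) + 1 ≠ 0 := by simp
  have hN : (n : ℝ≥0∞) + 1 ≠ ∞ := by simp
  have htail : ((n : ℝ≥0∞) + 1) ^ (1 / q.toReal) * a (n + n) ≤ lqNorm q (fun j => a (n + j)) :=
    succ_rpow_mul_le_lqNorm_of_antitone (fun i j hij => ha (by omega)) hq n
  refine rpow_le_div_of_rpow_inv_mul_le hN₀ hN hp ?_
  calc ((n : ℝ≥0∞) + 1) ^ (1 / p) * a (2 * n)
      = ((n : ℝ≥0∞) + 1) ^ (1 / p - 1 / q.toReal) *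
          (((n : ℝ≥0∞) + 1) ^ (1 / q.toReal) * a (n + n)) := by
        rw [← mul_assoc, ← ENNReal.rpow_add _ _ hN₀ hN, two_mul]
        ring_nf
    _ ≤ _ := by gcongr

end ENNReal

theorem lower_jackson_estimate_general
    (b : ℕ → ℝ)
    (hmono : ∀ k, 1 ≤ k → b (k + 1) ≤ b k)
    (p : ℝ) (hp : 0 < p) (q : ℝ≥0∞) (hpq : ENNReal.ofReal p < q) :
    (2 : ℝ≥0∞) ^ (-(1 / p)) * (∑' k : ℕ, ENNReal.ofReal (b (k + 1)) ^ p) ^ (1 / p) ≤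
      (∑' n : ℕ,
          (((n : ℝ≥0∞) + 1) ^ (1 / p - 1 / q.toReal) *
              (if q = ∞ then ⨆ j : ℕ, ENNReal.ofReal (b (n + 1 + j))
                else (∑' j : ℕ, ENNReal.ofReal (b (n + 1 + j)) ^ q.toReal) ^ (1 / q.toReal))) ^ p /
            ((n : ℝ≥0∞) + 1)) ^ (1 / p) := by
  set a : ℕ → ℝ≥0∞ := fun k => ENNReal.ofReal (b (k + 1))
  have ha : Antitone a :=
    antitone_nat_of_succ_le fun k => ENNReal.ofReal_le_ofReal (hmono (k + 1) (by omega))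
  have hq : q ≠ 0 := (hpq.trans_le' zero_le).ne'
  have htail : ∀ n j, ENNReal.ofReal (b (n + 1 + j)) = a (n + j) := fun n j => by
    simp only [a, add_right_comm]
  simp only [htail]
  calc (2 : ℝ≥0∞) ^ (-(1 / p)) * (∑' k, a k ^ p) ^ (1 / p)
      ≤ (∑' n, a (2 * n) ^ p) ^ (1 / p) := two_rpow_neg_mul_tsum_rpow_le_of_antitone ha hp
    _ ≤ _ := by
        gcongr with n
        exact rpow_le_weighted_lqNorm_tail ha hp hq n

/-- Let `b = (b_k)_{k ≥ 1}` be a non-increasing sequence of positive reals,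
`0 < p < q ≤ ∞`, `α = 1/p − 1/q` and `σ_{n,q}(b) = (∑_{k=n}^∞ b_k^q)^{1/q}` (with the sup
interpretation for `q = ∞`). Then
`2^{-1/p} ‖b‖_{ℓ^p} ≤ (∑_{n=1}^∞ (n^α σ_{n,q}(b))^p / n)^{1/p}`.
The computation is carried out in `ℝ≥0∞` so that both sides are always defined. -/
theorem lower_jackson_estimate
    (b : ℕ → ℝ) (hpos : ∀ k, 1 ≤ k → 0 < b k)
    (hmono : ∀ k, 1 ≤ k → b (k + 1) ≤ b k)
    (p : ℝ) (hp : 0 < p) (q : ℝ≥0∞) (hpq : ENNReal.ofReal p < q) :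
    (2 : ℝ≥0∞) ^ (-(1 / p)) * (∑' k : ℕ, ENNReal.ofReal (b (k + 1)) ^ p) ^ (1 / p) ≤
      (∑' n : ℕ,
          (((n : ℝ≥0∞) + 1) ^ (1 / p - 1 / q.toReal) *
              (if q = ∞ then ⨆ j : ℕ, ENNReal.ofReal (b (n + 1 + j))
                else (∑' j : ℕ, ENNReal.ofReal (b (n + 1 + j)) ^ q.toReal) ^ (1 / q.toReal))) ^ p /
            ((n : ℝ≥0∞) + 1)) ^ (1 / p) :=
  lower_jackson_estimate_general b hmono p hp q hpq
end

section
/- Let b = (b_k)_{k ≥ 1} be a non-increasing sequence of positive numbers, 0 < p < q ≤ ∞, α = 1/p − 1/q, and σ_{n,q}(b) = (∑_{k=n}^∞ b_k^q)^{1/q}. Then there is a constant C = C(p,q) such that (∑_{n=1}^∞ (n^α σ_{n,q}(b))^p / n)^{1/p} ≤ C ‖b‖_{ℓ^p}. -/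
/-!
Write `m = n + 1` and `S = ∑_{j ≥ m} b_j^q`. Cutting `[m, ∞)` into the dyadic blocks
`[2^i m, 2^(i+1) m)` and bounding each block by its length times its first term gives
`S / m ≤ ∑_i 2^i b_{2^i m}^q`. The weight is chosen so that the `n`-th term on the left is exactly
`(S / m)^(p/q)`, and since `p/q < 1` the map `x ↦ x^(p/q)` is subadditive, so that term is at most
`∑_i 2^(i p/q) b_{2^i m}^p`. Each `b_{2^i m}^p` is dominated by the `2^i` terms of the block ending
at `2^i m`, so summing over `m` costs a factor `2^(-i)`, and the geometric series in
`2^(i (p/q - 1))` converges. For `q = ∞` the tail supremum is `b_m` and both sides agree.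
-/

open ENNReal

namespace ENNReal

theorem rpow_tsum_le_tsum_rpow {ι : Type*} (g : ι → ℝ≥0∞) {c : ℝ} (hc0 : 0 < c) (hc1 : c ≤ 1) :
    (∑' i, g i) ^ c ≤ ∑' i, g i ^ c := by
  rw [ENNReal.tsum_eq_iSup_sum, (ENNReal.monotone_rpow_of_nonneg hc0.le).map_iSup_of_continuousAt
    ENNReal.continuous_rpow_const.continuousAt (ENNReal.zero_rpow_of_pos hc0)]
  exact iSup_le fun s => (Finset.le_sum_of_subadditive (· ^ c) (ENNReal.zero_rpow_of_pos hc0).le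
    (fun x y => ENNReal.rpow_add_le_add_rpow x y hc0.le hc1) s g).trans (ENNReal.sum_le_tsum s)

variable {f : ℕ → ℝ≥0∞}

theorem tsum_tail_le_mul_tsum_condensed (hf : ∀ ⦃m n⦄, 0 < m → m ≤ n → f n ≤ f m) {m : ℕ}
    (hm : 0 < m) : ∑' j, f (m + j) ≤ m * ∑' i : ℕ, 2 ^ i * f (2 ^ i * m) := by
  have hu : StrictMono fun i : ℕ => 2 ^ i * m := fun i j hij =>
    Nat.mul_lt_mul_of_pos_right (Nat.pow_lt_pow_right Nat.one_lt_two hij) hm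
  rw [ENNReal.tsum_eq_iSup_nat' ((Filter.tendsto_sub_atTop_nat m).comp hu.tendsto_atTop)]
  refine iSup_le fun n => ?_
  have hblocks := Finset.le_sum_schlomilch' hf (fun i => Nat.mul_pos (Nat.two_pow_pos i) hm)
    hu.monotone n
  simp only [Function.comp_apply, ← Finset.sum_Ico_eq_sum_range]
  calc ∑ k ∈ Finset.Ico m (2 ^ n * m), f k
      ≤ ∑ i ∈ Finset.range n, (2 ^ (i + 1) * m - 2 ^ i * m) • f (2 ^ i * m) := by
        simpa using hblocks
    _ = m * ∑ i ∈ Finset.range n, 2 ^ i * f (2 ^ i * m) := by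
        rw [Finset.mul_sum]
        refine Finset.sum_congr rfl fun i _ => ?_
        have hlen : 2 ^ (i + 1) * m - 2 ^ i * m = 2 ^ i * m := by
          rw [pow_succ, mul_comm _ 2, mul_assoc, two_mul, Nat.add_sub_cancel]
        rw [hlen, nsmul_eq_mul]
        push_cast
        ring
    _ ≤ m * ∑' i : ℕ, 2 ^ i * f (2 ^ i * m) := by gcongr; exact ENNReal.sum_le_tsum _

theorem mul_tsum_mul_succ_le_tsum_succ (hf : ∀ ⦃m n⦄, 0 < m → m ≤ n → f n ≤ f m) (N : ℕ) :
    N * ∑' n, f (N * (n + 1)) ≤ ∑' k, f (k + 1) := by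
  obtain rfl | hN := N.eq_zero_or_pos
  · simp
  have : NeZero N := ⟨hN.ne'⟩
  calc (N : ℝ≥0∞) * ∑' n, f (N * (n + 1)) = ∑' n, ∑' _ : Fin N, f (N * (n + 1)) := by
        simp [ENNReal.tsum_mul_left]
    _ ≤ ∑' n, ∑' t : Fin N, f (n * N + t + 1) :=
        ENNReal.tsum_le_tsum fun n => ENNReal.tsum_le_tsum fun t =>
          hf (Nat.succ_pos _) (by nlinarith [t.isLt])
    _ = ∑' z : ℕ × Fin N, f ((Nat.divModEquiv N).symm z + 1) := by
        rw [ENNReal.tsum_prod']; rfl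
    _ = ∑' k, f (k + 1) := (Nat.divModEquiv N).symm.tsum_eq (fun k => f (k + 1))

theorem iSup_tail_eq (hf : ∀ ⦃m n⦄, 0 < m → m ≤ n → f n ≤ f m) {m : ℕ} (hm : 0 < m) :
    ⨆ j, f (m + j) = f m :=
  le_antisymm (iSup_le fun j => hf hm (Nat.le_add_right m j)) (le_iSup_of_le 0 le_rfl)

theorem rpow_sub_mul_rpow_div_self {x : ℝ≥0∞} (hx0 : x ≠ 0) (hx : x ≠ ∞) (y : ℝ≥0∞)
    {p s : ℝ} (hp : 0 < p) : (x ^ (1 / p - s) * y) ^ p / x = (y / x ^ s) ^ p := by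
  have hexp : (1 / p - s) * p = 1 - s * p := by field_simp
  rw [ENNReal.mul_rpow_of_nonneg _ _ hp.le, ← ENNReal.rpow_mul, hexp, ENNReal.rpow_sub _ _ hx0 hx,
    ENNReal.rpow_one, ENNReal.div_rpow_of_nonneg _ _ hp.le, ENNReal.rpow_mul]
  calc x / (x ^ s) ^ p * y ^ p / x = x⁻¹ * x * (y ^ p * ((x ^ s) ^ p)⁻¹) := by
        simp only [div_eq_mul_inv]; ring
    _ = y ^ p / (x ^ s) ^ p := by rw [ENNReal.inv_mul_cancel hx0 hx, one_mul, ← div_eq_mul_inv]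

theorem weighted_tail_term_le (hf : ∀ ⦃m n⦄, 0 < m → m ≤ n → f n ≤ f m) {m : ℕ}
    (hm : 0 < m) {p r : ℝ} (hp : 0 < p) (hpr : p < r) :
    ((m : ℝ≥0∞) ^ (1 / p - 1 / r) * (∑' j, f (m + j) ^ r) ^ (1 / r)) ^ p / m ≤
      ∑' i : ℕ, (2 ^ (p / r)) ^ i * f (2 ^ i * m) ^ p := by
  have hr : 0 < r := hp.trans hpr
  have hm0 : (m : ℝ≥0∞) ≠ 0 := by exact_mod_cast hm.ne'
  have hfr : ∀ ⦃a b⦄, 0 < a → a ≤ b → f b ^ r ≤ f a ^ r := fun a b ha hab =>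
    ENNReal.rpow_le_rpow (hf ha hab) hr.le
  have hcond : (∑' j, f (m + j) ^ r) / m ≤ ∑' i : ℕ, 2 ^ i * f (2 ^ i * m) ^ r := by
    rw [ENNReal.div_le_iff_le_mul (Or.inl hm0) (Or.inl (ENNReal.natCast_ne_top m)), mul_comm]
    exact tsum_tail_le_mul_tsum_condensed hfr hm
  rw [rpow_sub_mul_rpow_div_self hm0 (ENNReal.natCast_ne_top m) _ hp,
    ← ENNReal.div_rpow_of_nonneg _ _ (one_div_nonneg.2 hr.le), ← ENNReal.rpow_mul,
    one_div_mul_eq_div]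
  calc ((∑' j, f (m + j) ^ r) / m) ^ (p / r)
      ≤ (∑' i : ℕ, 2 ^ i * f (2 ^ i * m) ^ r) ^ (p / r) :=
        ENNReal.rpow_le_rpow hcond (div_pos hp hr).le
    _ ≤ ∑' i : ℕ, (2 ^ i * f (2 ^ i * m) ^ r) ^ (p / r) :=
        rpow_tsum_le_tsum_rpow _ (div_pos hp hr) ((div_le_one hr).2 hpr.le)
    _ = ∑' i : ℕ, (2 ^ (p / r)) ^ i * f (2 ^ i * m) ^ p := by
        refine tsum_congr fun i => ?_
        rw [ENNReal.mul_rpow_of_nonneg _ _ (div_pos hp hr).le, ← ENNReal.rpow_mul,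
          mul_div_cancel₀ _ hr.ne', ← ENNReal.rpow_natCast, ← ENNReal.rpow_mul,
          ← ENNReal.rpow_natCast, ← ENNReal.rpow_mul, mul_comm (i : ℝ)]

theorem two_rpow_div_two_lt_one {s : ℝ} (hs : s < 1) : (2 : ℝ≥0∞) ^ s / 2 < 1 := by
  rw [ENNReal.div_lt_iff (by simp) (by simp), one_mul]
  simpa using ENNReal.rpow_lt_rpow_of_exponent_lt one_lt_two (by simp) hs

theorem tsum_weighted_tail_le (hf : ∀ ⦃m n⦄, 0 < m → m ≤ n → f n ≤ f m) {p r : ℝ} (hp : 0 < p)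
    (hpr : p < r) :
    ∑' n : ℕ, (((n : ℝ≥0∞) + 1) ^ (1 / p - 1 / r) * (∑' j, f (n + 1 + j) ^ r) ^ (1 / r)) ^ p /
        ((n : ℝ≥0∞) + 1) ≤
      (1 - 2 ^ (p / r) / 2)⁻¹ * ∑' k, f (k + 1) ^ p := by
  have hfp : ∀ ⦃a b⦄, 0 < a → a ≤ b → f b ^ p ≤ f a ^ p := fun a b ha hab =>
    ENNReal.rpow_le_rpow (hf ha hab) hp.le
  have hsparse (i : ℕ) : ∑' n : ℕ, f (2 ^ i * (n + 1)) ^ p ≤ (∑' k, f (k + 1) ^ p) / 2 ^ i := by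
    rw [ENNReal.le_div_iff_mul_le (Or.inl (by positivity)) (Or.inl (by simp)), mul_comm]
    exact_mod_cast mul_tsum_mul_succ_le_tsum_succ hfp (2 ^ i)
  calc _ ≤ ∑' n : ℕ, ∑' i : ℕ, (2 ^ (p / r)) ^ i * f (2 ^ i * (n + 1)) ^ p :=
        ENNReal.tsum_le_tsum fun n => by
          exact_mod_cast weighted_tail_term_le hf n.succ_pos hp hpr
    _ = ∑' i : ℕ, (2 ^ (p / r)) ^ i * ∑' n : ℕ, f (2 ^ i * (n + 1)) ^ p := by
        rw [ENNReal.tsum_comm]; simp_rw [ENNReal.tsum_mul_left]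
    _ ≤ ∑' i : ℕ, (2 ^ (p / r)) ^ i * ((∑' k, f (k + 1) ^ p) / 2 ^ i) := by
        gcongr with i; exact hsparse i
    _ = ∑' i : ℕ, (2 ^ (p / r) / 2) ^ i * ∑' k, f (k + 1) ^ p := by
        refine tsum_congr fun i => ?_
        rw [ENNReal.div_eq_inv_mul, ENNReal.div_eq_inv_mul, mul_pow, ENNReal.inv_pow]; ring
    _ = (1 - 2 ^ (p / r) / 2)⁻¹ * ∑' k, f (k + 1) ^ p := by
        rw [ENNReal.tsum_mul_right, ENNReal.tsum_geometric]

theorem ofReal_le_ofReal_of_succ_le {b : ℕ → ℝ} (hb : ∀ k, 1 ≤ k → b (k + 1) ≤ b k) :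
    ∀ ⦃m n⦄, 0 < m → m ≤ n → ENNReal.ofReal (b n) ≤ ENNReal.ofReal (b m) := fun _ _ hm hmn =>
  ENNReal.ofReal_le_ofReal (antitoneOn_nat_Ici_of_succ_le hb hm (hm.trans_le hmn) hmn)

end ENNReal

/-- Let `b = (b_k)_{k ≥ 1}` be a non-increasing sequence of positive reals,
`0 < p < q ≤ ∞`, `α = 1/p − 1/q` and `σ_{n,q}(b) = (∑_{k=n}^∞ b_k^q)^{1/q}` (with the sup
interpretation for `q = ∞`). Then there is a constant `C = C(p,q)` with
`(∑_{n=1}^∞ (n^α σ_{n,q}(b))^p / n)^{1/p} ≤ C ‖b‖_{ℓ^p}`.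
The computation is carried out in `ℝ≥0∞` so that both sides are always defined. -/
theorem upper_jackson_estimate
    (p : ℝ) (hp : 0 < p) (q : ℝ≥0∞) (hpq : ENNReal.ofReal p < q) :
    ∃ C : ℝ, 0 < C ∧
      ∀ b : ℕ → ℝ, (∀ k, 1 ≤ k → 0 < b k) → (∀ k, 1 ≤ k → b (k + 1) ≤ b k) →
        (∑' n : ℕ,
            (((n : ℝ≥0∞) + 1) ^ (1 / p - 1 / q.toReal) *
                (if q = ∞ then ⨆ j : ℕ, ENNReal.ofReal (b (n + 1 + j))
                  else (∑' j : ℕ, ENNReal.ofReal (b (n + 1 + j)) ^ q.toReal) ^ (1 / q.toReal))) ^ p /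
              ((n : ℝ≥0∞) + 1)) ^ (1 / p) ≤
          ENNReal.ofReal C * (∑' k : ℕ, ENNReal.ofReal (b (k + 1)) ^ p) ^ (1 / p) := by
  by_cases hq : q = ∞
  · subst hq
    refine ⟨1, one_pos, fun b _ hb => ?_⟩
    have hterm (n : ℕ) (y : ℝ≥0∞) :
        (((n : ℝ≥0∞) + 1) ^ (1 / p - 1 / (∞ : ℝ≥0∞).toReal) * y) ^ p / ((n : ℝ≥0∞) + 1) =
          y ^ p := by
      rw [ENNReal.rpow_sub_mul_rpow_div_self (by positivity) (by simp) _ hp]; simp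
    simp only [↓reduceIte, hterm, ENNReal.ofReal_one, one_mul,
      ENNReal.iSup_tail_eq (ENNReal.ofReal_le_ofReal_of_succ_le hb) (Nat.succ_pos _), le_refl]
  · set r := q.toReal
    have hpr : p < r := by
      simpa [ENNReal.toReal_ofReal hp.le] using ENNReal.toReal_strict_mono hq hpq
    set K : ℝ≥0∞ := (1 - 2 ^ (p / r) / 2)⁻¹
    have hK0 : K ≠ 0 := ENNReal.inv_ne_zero.2 (ENNReal.sub_ne_top ENNReal.one_ne_top)
    have hKtop : K ≠ ∞ := ENNReal.inv_ne_top.2 (tsub_pos_of_lt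
      (ENNReal.two_rpow_div_two_lt_one ((div_lt_one (hp.trans hpr)).2 hpr))).ne'
    have hK : K ^ (1 / p) ≠ ∞ := ENNReal.rpow_ne_top_of_nonneg (by positivity) hKtop
    refine ⟨(K ^ (1 / p)).toReal,
      ENNReal.toReal_pos (ENNReal.rpow_pos (pos_iff_ne_zero.2 hK0) hKtop).ne' hK, fun b _ hb => ?_⟩
    simp only [hq, ↓reduceIte]
    rw [ENNReal.ofReal_toReal hK, ← ENNReal.mul_rpow_of_nonneg _ _ (by positivity)]
    exact ENNReal.rpow_le_rpow
      (ENNReal.tsum_weighted_tail_le (ENNReal.ofReal_le_ofReal_of_succ_le hb) hp hpr) (by positivity)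
end

section
/- Let N : ℕ × ℕ → ℕ satisfy N(j,0) = N(0,k) = 0 and c₁ · jk/(j+k) ≤ N(j,k) ≤ c₂ · jk/(j+k) + c₂ for j,k ≥ 1, with constants c₁, c₂ > 0. Let I = {(j,k,ℓ) : j,k ∈ ℕ, −N(j,k) ≤ ℓ ≤ N(j,k)} and I_n = {(j,k,ℓ) ∈ I : j + k ≤ n}. Then #I_n ≍ n³, i.e., there exist constants C₁, C₂ > 0 with C₁ n³ ≤ #I_n ≤ C₂ n³ for all n ≥ 1. -/
/-- Let `N : ℕ × ℕ → ℕ` satisfy `N(j,0) = N(0,k) = 0` and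
`c₁ · jk/(j+k) ≤ N(j,k) ≤ c₂ · jk/(j+k) + c₂` for `j,k ≥ 1`. With
`I_n = {(j,k,ℓ) : j+k ≤ n, −N(j,k) ≤ ℓ ≤ N(j,k)}`, whose cardinality is
`∑_{j+k ≤ n} (2 N(j,k) + 1)`, one has `#I_n ≍ n³`. -/
theorem card_In_asymp
    (N : ℕ → ℕ → ℕ)
    (hN0 : ∀ j, N j 0 = 0) (h0N : ∀ k, N 0 k = 0)
    (c₁ c₂ : ℝ) (hc₁ : 0 < c₁) (hc₂ : 0 < c₂)
    (hlow : ∀ j k : ℕ, 1 ≤ j → 1 ≤ k → c₁ * ((j : ℝ) * k / ((j : ℝ) + k)) ≤ (N j k : ℝ))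
    (hup : ∀ j k : ℕ, 1 ≤ j → 1 ≤ k → (N j k : ℝ) ≤ c₂ * ((j : ℝ) * k / ((j : ℝ) + k)) + c₂) :
    ∃ C₁ C₂ : ℝ, 0 < C₁ ∧ 0 < C₂ ∧ ∀ n : ℕ, 1 ≤ n →
      C₁ * (n : ℝ) ^ 3 ≤
        ((∑ j ∈ Finset.range (n + 1), ∑ k ∈ Finset.range (n + 1 - j), (2 * N j k + 1)) : ℝ) ∧
      ((∑ j ∈ Finset.range (n + 1), ∑ k ∈ Finset.range (n + 1 - j), (2 * N j k + 1)) : ℝ) ≤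
        C₂ * (n : ℝ) ^ 3 := by
  refine ⟨min (c₁ / 128) 1, 4 * (4 * c₂ + 1), lt_min (by positivity) one_pos, by positivity, ?_⟩
  intro n hn
  have hn1 : (1 : ℝ) ≤ (n : ℝ) := by exact_mod_cast hn
  have hnpos : (0 : ℝ) < (n : ℝ) := by linarith
  constructor
  · -- lower bound
    rcases eq_or_lt_of_le hn with h1 | h2
    · -- n = 1
      rw [← h1]
      have hs : ((∑ j ∈ Finset.range (1 + 1), ∑ k ∈ Finset.range (1 + 1 - j),
          (2 * N j k + 1)) : ℝ) = 3 := by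
        norm_num [Finset.sum_range_succ, hN0, h0N]
      rw [hs]
      have : min (c₁ / 128) 1 ≤ 1 := min_le_right _ _
      nlinarith
    · -- n ≥ 2
      have hn2 : (2 : ℝ) ≤ (n : ℝ) := by exact_mod_cast h2
      set m := n / 2 with hm
      -- restrict the sum
      have hT : (∑ j ∈ Finset.Icc 1 m, ∑ k ∈ Finset.Icc 1 m, (2 * N j k + 1))
          ≤ ∑ j ∈ Finset.range (n + 1), ∑ k ∈ Finset.range (n + 1 - j), (2 * N j k + 1) := by
        calc ∑ j ∈ Finset.Icc 1 m, ∑ k ∈ Finset.Icc 1 m, (2 * N j k + 1)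
            ≤ ∑ j ∈ Finset.Icc 1 m, ∑ k ∈ Finset.range (n + 1 - j), (2 * N j k + 1) := by
              refine Finset.sum_le_sum fun j hj => ?_
              refine Finset.sum_le_sum_of_subset fun k hk => ?_
              simp only [Finset.mem_Icc, Finset.mem_range] at *
              omega
          _ ≤ _ := by
              refine Finset.sum_le_sum_of_subset fun j hj => ?_
              simp only [Finset.mem_Icc, Finset.mem_range] at *
              omega
      have hTR : ((∑ j ∈ Finset.Icc 1 m, ∑ k ∈ Finset.Icc 1 m, (2 * N j k + 1)) : ℝ)
          ≤ ((∑ j ∈ Finset.range (n + 1), ∑ k ∈ Finset.range (n + 1 - j), (2 * N j k + 1)) : ℝ) := by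
        exact_mod_cast hT
      -- termwise lower bound
      have hterm : ∀ j ∈ Finset.Icc 1 m, ∀ k ∈ Finset.Icc 1 m,
          2 * c₁ / n * ((j : ℝ) * k) ≤ 2 * (N j k : ℝ) + 1 := by
        intro j hj k hk
        simp only [Finset.mem_Icc] at hj hk
        have hjk : (j : ℝ) + k ≤ n := by
          have : j + k ≤ n := by omega
          exact_mod_cast this
        have hjkpos : (0 : ℝ) < (j : ℝ) + k := by
          have : 0 < j + k := by omega
          exact_mod_cast this
        have hdiv : (j : ℝ) * k / n ≤ (j : ℝ) * k / ((j : ℝ) + k) := by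
          gcongr <;> first | positivity | exact hjkpos | exact hjk
        have hNlb := hlow j k hj.1 hk.1
        have : c₁ * ((j : ℝ) * k / n) ≤ (N j k : ℝ) := by
          calc c₁ * ((j : ℝ) * k / n) ≤ c₁ * ((j : ℝ) * k / ((j : ℝ) + k)) := by
                exact mul_le_mul_of_nonneg_left hdiv hc₁.le
            _ ≤ (N j k : ℝ) := hNlb
        have hNnn : (0 : ℝ) ≤ (N j k : ℝ) := Nat.cast_nonneg _
        have heq : 2 * c₁ / n * ((j : ℝ) * k) = 2 * (c₁ * ((j : ℝ) * k / n)) := by ring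
        rw [heq]
        linarith
      -- sum of lower bounds
      have hsum : ∑ j ∈ Finset.Icc 1 m, ∑ k ∈ Finset.Icc 1 m, (2 * c₁ / n * ((j : ℝ) * k))
          ≤ ((∑ j ∈ Finset.Icc 1 m, ∑ k ∈ Finset.Icc 1 m, (2 * N j k + 1)) : ℝ) := by
        push_cast
        refine Finset.sum_le_sum fun j hj => Finset.sum_le_sum fun k hk => ?_
        exact hterm j hj k hk
      set G := ∑ j ∈ Finset.Icc 1 m, (j : ℝ) with hGdef
      have hfact : ∑ j ∈ Finset.Icc 1 m, ∑ k ∈ Finset.Icc 1 m, (2 * c₁ / n * ((j : ℝ) * k))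
          = 2 * c₁ / n * (G * G) := by
        rw [hGdef, Finset.sum_mul_sum, Finset.mul_sum]
        refine Finset.sum_congr rfl fun j _ => ?_
        rw [Finset.mul_sum]
      -- Gauss sum
      have hGauss : (∑ j ∈ Finset.Icc 1 m, j) * 2 = m * (m + 1) := by
        have heq : ∑ j ∈ Finset.Icc 1 m, j = ∑ j ∈ Finset.range (m + 1), j := by
          refine Finset.sum_subset (fun j hj => ?_) (fun j hj hnj => ?_)
          · simp only [Finset.mem_Icc, Finset.mem_range] at *; omega
          · simp only [Finset.mem_Icc, Finset.mem_range] at *; omega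
        rw [heq, Finset.sum_range_id_mul_two, Nat.add_sub_cancel, Nat.mul_comm]
      have hGval : G * 2 = (m : ℝ) * ((m : ℝ) + 1) := by
        have : ((∑ j ∈ Finset.Icc 1 m, j : ℕ) : ℝ) * 2 = ((m * (m + 1) : ℕ) : ℝ) := by
          exact_mod_cast congrArg (Nat.cast : ℕ → ℝ) hGauss
        push_cast at this
        rw [hGdef]
        push_cast
        linarith [this]
      -- m ≥ (n-1)/2
      have hmlb : ((n : ℝ) - 1) / 2 ≤ (m : ℝ) := by
        have : n ≤ 2 * m + 1 := by omega
        have : (n : ℝ) ≤ 2 * (m : ℝ) + 1 := by exact_mod_cast this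
        linarith
      have hGlb : (n : ℝ) ^ 2 / 16 ≤ G := by
        nlinarith [hGval, hmlb, hn2]
      have hGnn : (0 : ℝ) ≤ G := le_trans (by positivity) hGlb
      have hGsq : (n : ℝ) ^ 2 / 16 * ((n : ℝ) ^ 2 / 16) ≤ G * G :=
        mul_le_mul hGlb hGlb (by positivity) hGnn
      have hkey : c₁ / 128 * (n : ℝ) ^ 3 ≤ 2 * c₁ / n * (G * G) := by
        have hre : 2 * c₁ / n * (G * G) = 2 * c₁ * (G * G) / n := by ring
        rw [hre, le_div_iff₀ hnpos]
        nlinarith [hGsq, hc₁.le, hnpos]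
      calc min (c₁ / 128) 1 * (n : ℝ) ^ 3 ≤ c₁ / 128 * (n : ℝ) ^ 3 := by
            apply mul_le_mul_of_nonneg_right (min_le_left _ _) (by positivity)
        _ ≤ 2 * c₁ / n * (G * G) := hkey
        _ = ∑ j ∈ Finset.Icc 1 m, ∑ k ∈ Finset.Icc 1 m, (2 * c₁ / n * ((j : ℝ) * k)) :=
            hfact.symm
        _ ≤ ((∑ j ∈ Finset.Icc 1 m, ∑ k ∈ Finset.Icc 1 m, (2 * N j k + 1)) : ℝ) := hsum
        _ ≤ _ := hTR
  · -- upper bound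
    have hterm : ∀ j k : ℕ, k ≤ n → (2 * (N j k : ℝ) + 1) ≤ (4 * c₂ + 1) * n := by
      intro j k hk
      have hkn : (k : ℝ) ≤ n := by exact_mod_cast hk
      rcases Nat.eq_zero_or_pos j with hj | hj
      · subst hj
        rw [h0N]
        push_cast
        nlinarith
      rcases Nat.eq_zero_or_pos k with hk0 | hk0
      · subst hk0
        rw [hN0]
        push_cast
        nlinarith
      · have hup' := hup j k hj hk0
        have hjpos : (0 : ℝ) < j := by exact_mod_cast hj
        have hkpos : (0 : ℝ) < k := by exact_mod_cast hk0
        have hdivle : (j : ℝ) * k / ((j : ℝ) + k) ≤ (k : ℝ) := by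
          rw [div_le_iff₀ (by linarith)]
          nlinarith
        nlinarith
    calc ((∑ j ∈ Finset.range (n + 1), ∑ k ∈ Finset.range (n + 1 - j), (2 * N j k + 1)) : ℝ)
        = ∑ j ∈ Finset.range (n + 1), ∑ k ∈ Finset.range (n + 1 - j),
            (2 * (N j k : ℝ) + 1) := by push_cast; ring_nf
      _ ≤ ∑ j ∈ Finset.range (n + 1), ∑ k ∈ Finset.range (n + 1 - j), ((4 * c₂ + 1) * n) := by
          refine Finset.sum_le_sum fun j hj => Finset.sum_le_sum fun k hk => ?_
          exact hterm j k (by simp only [Finset.mem_range] at hk; omega)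
      _ ≤ ∑ j ∈ Finset.range (n + 1), ((n : ℝ) + 1) * ((4 * c₂ + 1) * n) := by
          refine Finset.sum_le_sum fun j hj => ?_
          rw [Finset.sum_const, Finset.card_range, nsmul_eq_mul]
          have : ((n + 1 - j : ℕ) : ℝ) ≤ (n : ℝ) + 1 := by
            have : (n + 1 - j : ℕ) ≤ n + 1 := by omega
            exact_mod_cast this
          have hpos : (0 : ℝ) ≤ (4 * c₂ + 1) * n := by positivity
          exact mul_le_mul_of_nonneg_right this hpos
      _ = ((n : ℝ) + 1) * (((n : ℝ) + 1) * ((4 * c₂ + 1) * n)) := by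
          rw [Finset.sum_const, Finset.card_range, nsmul_eq_mul]
          push_cast; ring
      _ ≤ 4 * (4 * c₂ + 1) * (n : ℝ) ^ 3 := by
          have h1 : ((n : ℝ) + 1) * ((n : ℝ) + 1) ≤ 4 * (n : ℝ) ^ 2 := by nlinarith
          have h2 : (0 : ℝ) ≤ (4 * c₂ + 1) * n := by positivity
          nlinarith [mul_le_mul_of_nonneg_right h1 h2]
end

section
/- Let 1 ≤ p ≤ q ≤ ∞ with α = 1/p − 1/q, let s, t ∈ ℝ, and consider the weights on the index set I = {(j,k,ℓ) : j,k ∈ ℕ₀, |ℓ| ≤ N(j,k)} given by w_{j,k,ℓ} = (1+k)^s μ_{j,k,ℓ}^{1/p} and v_{j,k,ℓ} = (1+k)^t μ_{j,k,ℓ}^{1/q}, where μ_{j,k,ℓ} ≍ (j+k)(jk cos(πℓ/(2N(j,k))))^{d−2} for 1 ≤ |ℓ| < N(j,k), j,k ≥ 1, μ_{j,k,±N(j,k)} = j^{d−1} + k^{d−1} + 1, and d ≥ 2. Then sup_I v/w < ∞ if and only if t − s ≤ α(d−1), and v/w ∈ c₀(I) if and only if p < q and t − s < α(d−1). -/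
open Real ENNReal

private lemma rmwc_pow_lb (n : ℕ) (hn : 1 ≤ n) {k : ℝ} (hk : 0 ≤ k) :
    k ^ n + 1 ≤ (1 + k) ^ n := by
  induction n with
  | zero => exact absurd hn (by omega)
  | succ m ih =>
    rcases Nat.eq_zero_or_pos m with hm | hm
    · subst hm; simp; linarith
    · have h := ih hm
      have hkm : 0 ≤ k ^ m := pow_nonneg hk m
      calc k ^ (m+1) + 1 ≤ (1+k) * (k ^ m + 1) := by ring_nf; nlinarith
        _ ≤ (1+k) * (1+k)^m := by nlinarith
        _ = (1+k)^(m+1) := by ring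

private lemma rmwc_pow_ub (n : ℕ) {k : ℝ} (hk : 0 ≤ k) :
    (1 + k) ^ n ≤ 2 ^ n * (k ^ n + 1) := by
  rcases le_total k 1 with h | h
  · calc (1+k)^n ≤ 2^n := pow_le_pow_left₀ (by linarith) (by linarith) n
      _ ≤ 2^n * (k^n+1) := by nlinarith [pow_nonneg hk n, pow_pos (by norm_num : (0:ℝ) < 2) n]
  · calc (1+k)^n ≤ (2*k)^n := pow_le_pow_left₀ (by linarith) (by linarith) n
      _ = 2^n * k^n := mul_pow 2 k n
      _ ≤ 2^n * (k^n+1) := by nlinarith [pow_pos (by norm_num : (0:ℝ) < 2) n]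

private lemma rmwc_le_rpow_inv {β M x : ℝ} (hβ : 0 < β) (hM : 0 < M)
    (h : x ^ β ≤ M) (hx : 0 ≤ x) : x ≤ M ^ (1/β) := by
  by_contra hc
  push_neg at hc
  have h2 := Real.rpow_lt_rpow (Real.rpow_nonneg hM.le _) hc hβ
  rw [← Real.rpow_mul hM.le, one_div_mul_cancel hβ.ne', Real.rpow_one] at h2
  linarith

private lemma rmwc_unbdd {β M : ℝ} (hβ : 0 < β) (h : ∀ k : ℕ, ((1:ℝ) + k) ^ β ≤ M) : False := by
  have hM : (1:ℝ) ≤ M := by simpa using h 0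
  obtain ⟨k, hk⟩ := exists_nat_gt (M ^ (1/β))
  have h1 : (1:ℝ) + k ≤ M ^ (1/β) := rmwc_le_rpow_inv hβ (by linarith) (h k) (by positivity)
  have : (0:ℝ) ≤ k := Nat.cast_nonneg k
  linarith

private lemma rmwc_cos {n : ℕ} (hn : 1 ≤ n) {ℓ : ℤ} (hℓ : |ℓ| < (n:ℤ)) :
    (1:ℝ)/n ≤ Real.cos (π * ℓ / (2*(n:ℝ))) := by
  have hn0 : (0:ℝ) < n := by exact_mod_cast hn
  have hπ := Real.pi_pos
  have habs : |(ℓ:ℝ)| ≤ (n:ℝ) - 1 := by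
    have h1 : |ℓ| ≤ (n:ℤ) - 1 := by omega
    have h2 : ((|ℓ| : ℤ) : ℝ) ≤ ((n:ℤ):ℝ) - 1 := by exact_mod_cast h1
    rwa [Int.cast_abs, Int.cast_natCast] at h2
  have hθ : |π * ℓ / (2*(n:ℝ))| = π * |(ℓ:ℝ)| / (2*(n:ℝ)) := by
    rw [abs_div, abs_mul, abs_of_pos hπ, abs_of_pos (by positivity : (0:ℝ) < 2*(n:ℝ))]
  have h1 : |π * ℓ / (2*(n:ℝ))| ≤ π/2 - π/(2*(n:ℝ)) := by
    rw [hθ]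
    calc π * |(ℓ:ℝ)| / (2*(n:ℝ)) ≤ π * ((n:ℝ)-1) / (2*(n:ℝ)) := by gcongr
      _ = π/2 - π/(2*(n:ℝ)) := by field_simp
  calc (1:ℝ)/n = 2/π * (π/(2*(n:ℝ))) := by field_simp
    _ ≤ Real.sin (π/(2*(n:ℝ))) := Real.mul_le_sin (by positivity) (by
        have hn1 : (1:ℝ) ≤ (n:ℝ) := by exact_mod_cast hn
        rw [div_le_div_iff₀ (by positivity) (by norm_num)]
        nlinarith)
    _ = Real.cos (π/2 - π/(2*(n:ℝ))) := (Real.cos_pi_div_two_sub _).symm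
    _ ≤ Real.cos |π * ℓ / (2*(n:ℝ))| :=
        Real.cos_le_cos_of_nonneg_of_le_pi (abs_nonneg _) (by
          have hq : (0:ℝ) < π/(2*(n:ℝ)) := by positivity
          linarith) h1
    _ = Real.cos (π * ℓ / (2*(n:ℝ))) := Real.cos_abs _


set_option maxHeartbeats 1000000

/-- Let `1 ≤ p ≤ q ≤ ∞`, `α = 1/p − 1/q`, `s, t ∈ ℝ`, and consider on the
index set `I = {(j,k,ℓ) : |ℓ| ≤ N(j,k)}` the weights `w = (1+k)^s μ^{1/p}` and
`v = (1+k)^t μ^{1/q}`, where `N(j,k) ≍ jk/(j+k)` (with `N(j,0) = N(0,k) = 0`),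
`μ_{j,k,ℓ} ≍ (j+k)(jk cos(πℓ/(2N(j,k))))^{d−2}` for `j,k ≥ 1`, `|ℓ| < N(j,k)`,
`μ_{j,k,±N(j,k)} = j^{d−1} + k^{d−1} + 1`, and `d ≥ 2`. Then `sup_I v/w < ∞` iff
`t − s ≤ α(d−1)`, and `v/w ∈ c₀(I)` iff `p < q` and `t − s < α(d−1)`. -/
theorem radial_modulation_weight_criterion
    (d : ℕ) (hd : 2 ≤ d) (p q : ℝ≥0∞) (hp : 1 ≤ p) (hpq : p ≤ q) (s t : ℝ)
    (N : ℕ → ℕ → ℕ) (hN0 : ∀ j, N j 0 = 0) (h0N : ∀ k, N 0 k = 0)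
    (hNasymp : ∃ c₁ c₂ : ℝ, 0 < c₁ ∧ 0 < c₂ ∧ ∀ j k : ℕ, 1 ≤ j → 1 ≤ k →
      c₁ * ((j : ℝ) * k / ((j : ℝ) + k)) ≤ (N j k : ℝ) ∧
      (N j k : ℝ) ≤ c₂ * ((j : ℝ) * k / ((j : ℝ) + k)) + c₂)
    (μ : ℕ × ℕ × ℤ → ℝ) (hμpos : ∀ x, 0 < μ x)
    (hμmid : ∃ c₁ c₂ : ℝ, 0 < c₁ ∧ 0 < c₂ ∧ ∀ j k : ℕ, 1 ≤ j → 1 ≤ k →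
      ∀ ℓ : ℤ, |ℓ| < (N j k : ℤ) →
        c₁ * (((j : ℝ) + k) *
            ((j : ℝ) * k * Real.cos (π * (ℓ : ℝ) / (2 * (N j k : ℝ)))) ^ (d - 2)) ≤
          μ (j, k, ℓ) ∧
        μ (j, k, ℓ) ≤
          c₂ * (((j : ℝ) + k) *
            ((j : ℝ) * k * Real.cos (π * (ℓ : ℝ) / (2 * (N j k : ℝ)))) ^ (d - 2)))
    (hμend : ∀ j k : ℕ, ∀ ℓ : ℤ, (ℓ = (N j k : ℤ) ∨ ℓ = -(N j k : ℤ)) →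
      μ (j, k, ℓ) = (j : ℝ) ^ (d - 1) + (k : ℝ) ^ (d - 1) + 1) :
    (BddAbove (Set.range
        (fun x : {x : ℕ × ℕ × ℤ // |x.2.2| ≤ (N x.1 x.2.1 : ℤ)} =>
          ((1 + (x.1.2.1 : ℝ)) ^ t * μ x.1 ^ q⁻¹.toReal) /
            ((1 + (x.1.2.1 : ℝ)) ^ s * μ x.1 ^ p⁻¹.toReal))) ↔
      t - s ≤ (p⁻¹.toReal - q⁻¹.toReal) * ((d : ℝ) - 1)) ∧
    ((∀ ε : ℝ, 0 < ε →
        {x : {x : ℕ × ℕ × ℤ // |x.2.2| ≤ (N x.1 x.2.1 : ℤ)} |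
          ε ≤ ((1 + (x.1.2.1 : ℝ)) ^ t * μ x.1 ^ q⁻¹.toReal) /
            ((1 + (x.1.2.1 : ℝ)) ^ s * μ x.1 ^ p⁻¹.toReal)}.Finite) ↔
      (p < q ∧ t - s < (p⁻¹.toReal - q⁻¹.toReal) * ((d : ℝ) - 1))) := by
  obtain ⟨cN₁, cN₂, hcN₁, hcN₂, hNbd⟩ := hNasymp
  obtain ⟨cμ₁, cμ₂, hcμ₁, hcμ₂, hμbd⟩ := hμmid
  set P := p⁻¹.toReal with hPdef
  set Q := q⁻¹.toReal with hQdef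
  have hp0 : p ≠ 0 := (lt_of_lt_of_le zero_lt_one hp).ne'
  have hq0 : q ≠ 0 := (lt_of_lt_of_le zero_lt_one (hp.trans hpq)).ne'
  have hpinv_ne_top : p⁻¹ ≠ ⊤ := by simp [hp0]
  have hqinv_ne_top : q⁻¹ ≠ ⊤ := by simp [hq0]
  have hQP : Q ≤ P := ENNReal.toReal_mono hpinv_ne_top (ENNReal.inv_le_inv.2 hpq)
  have hα0 : 0 ≤ P - Q := sub_nonneg.2 hQP
  have hdR : (1:ℝ) ≤ (d:ℝ) - 1 := by
    have : (2:ℝ) ≤ d := by exact_mod_cast hd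
    linarith
  have hdcast : ((d - 1 : ℕ) : ℝ) = (d:ℝ) - 1 := by
    rw [Nat.cast_sub (by omega : 1 ≤ d)]; norm_num
  -- the key lower bound for μ
  have hkey : ∃ c : ℝ, 0 < c ∧ ∀ j k : ℕ, ∀ ℓ : ℤ, |ℓ| ≤ (N j k : ℤ) →
      c * (1 + (j:ℝ)) ^ (d-1) ≤ μ (j,k,ℓ) ∧ c * (1 + (k:ℝ)) ^ (d-1) ≤ μ (j,k,ℓ) := by
    refine ⟨min (((2:ℝ)^(d-1))⁻¹) (cμ₁ * ((3*cN₂)^(d-2))⁻¹), by positivity, ?_⟩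
    intro j k ℓ hℓ
    set c := min (((2:ℝ)^(d-1))⁻¹) (cμ₁ * ((3*cN₂)^(d-2))⁻¹) with hcdef
    have hc0 : 0 < c := by rw [hcdef]; positivity
    rcases lt_or_eq_of_le hℓ with hlt | heq
    · -- interior case
      have hj : 1 ≤ j := by
        by_contra hj'
        have hj0 : j = 0 := by omega
        rw [hj0, h0N] at hlt
        push_cast at hlt
        exact absurd hlt (not_lt.2 (abs_nonneg ℓ))
      have hk : 1 ≤ k := by
        by_contra hk'
        have hk0 : k = 0 := by omega
        rw [hk0, hN0] at hlt
        push_cast at hlt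
        exact absurd hlt (not_lt.2 (abs_nonneg ℓ))
      have hNpos : 1 ≤ N j k := by
        have h0 : (0:ℤ) < (N j k : ℤ) := lt_of_le_of_lt (abs_nonneg ℓ) hlt
        have : 0 < N j k := by exact_mod_cast h0
        omega
      have hjR : (1:ℝ) ≤ (j:ℝ) := by exact_mod_cast hj
      have hkR : (1:ℝ) ≤ (k:ℝ) := by exact_mod_cast hk
      have hNR : (1:ℝ) ≤ (N j k : ℝ) := by exact_mod_cast hNpos
      have hcos : (1:ℝ)/(N j k) ≤ Real.cos (π * ℓ / (2 * (N j k : ℝ))) := rmwc_cos hNpos hlt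
      have hcospos : (0:ℝ) < Real.cos (π * ℓ / (2 * (N j k : ℝ))) :=
        lt_of_lt_of_le (by positivity) hcos
      have hNub := (hNbd j k hj hk).2
      have hjk2 : (j:ℝ) + k ≤ 2*((j:ℝ)*k) := by nlinarith
      have hX : (j:ℝ)*k/((j:ℝ)+k) * ((j:ℝ)+k) = (j:ℝ)*k := by field_simp
      have hNle' : (N j k : ℝ) * ((j:ℝ)+k) ≤ 3*cN₂*((j:ℝ)*k) := by
        have h10 := mul_le_mul_of_nonneg_right hNub (by positivity : (0:ℝ) ≤ (j:ℝ)+k)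
        have h11 := mul_le_mul_of_nonneg_left hjk2 hcN₂.le
        nlinarith [hX]
      have hkey2 : ((j:ℝ)+k)/(3*cN₂) ≤ (j:ℝ)*k * Real.cos (π * ℓ / (2 * (N j k : ℝ))) := by
        have h8 : ((j:ℝ)+k)/(3*cN₂) ≤ (j:ℝ)*k/(N j k) := by
          rw [div_le_div_iff₀ (by positivity) (by linarith)]
          nlinarith
        refine le_trans h8 ?_
        calc (j:ℝ)*k/(N j k) = (j:ℝ)*k * ((1:ℝ)/(N j k)) := by ring
          _ ≤ (j:ℝ)*k * Real.cos (π * ℓ / (2 * (N j k : ℝ))) :=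
            mul_le_mul_of_nonneg_left hcos (by positivity)
      have hμlow := (hμbd j k hj hk ℓ hlt).1
      have hmain : cμ₁ * ((3*cN₂)^(d-2))⁻¹ * ((j:ℝ)+k)^(d-1) ≤ μ (j,k,ℓ) := by
        refine le_trans ?_ hμlow
        have hpow : (((j:ℝ)+k)/(3*cN₂))^(d-2) ≤
            ((j:ℝ)*k * Real.cos (π * ℓ / (2 * (N j k : ℝ))))^(d-2) :=
          pow_le_pow_left₀ (by positivity) hkey2 _
        calc cμ₁ * ((3*cN₂)^(d-2))⁻¹ * ((j:ℝ)+k)^(d-1)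
            = cμ₁ * (((j:ℝ)+k) * (((j:ℝ)+k)/(3*cN₂))^(d-2)) := by
              rw [show d-1 = (d-2)+1 by omega, pow_succ, div_pow, div_eq_mul_inv]
              ring
          _ ≤ cμ₁ * (((j:ℝ)+k) *
              ((j:ℝ)*k * Real.cos (π * ℓ / (2 * (N j k : ℝ))))^(d-2)) := by
              refine mul_le_mul_of_nonneg_left (mul_le_mul_of_nonneg_left hpow (by positivity)) hcμ₁.le
      have hcle : c ≤ cμ₁ * ((3*cN₂)^(d-2))⁻¹ := min_le_right _ _
      constructor
      · refine le_trans ?_ hmain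
        refine mul_le_mul hcle (pow_le_pow_left₀ (by positivity) (by linarith) _) (by positivity) (by positivity)
      · refine le_trans ?_ hmain
        refine mul_le_mul hcle (pow_le_pow_left₀ (by positivity) (by linarith) _) (by positivity) (by positivity)
    · -- endpoint case
      have hend : ℓ = (N j k : ℤ) ∨ ℓ = -(N j k : ℤ) := ((abs_eq (Int.natCast_nonneg _)).1 heq)
      rw [hμend j k ℓ hend]
      have hcle : c ≤ (((2:ℝ)^(d-1))⁻¹) := min_le_left _ _
      have hjn : (0:ℝ) ≤ (j:ℝ)^(d-1) := by positivity
      have hkn : (0:ℝ) ≤ (k:ℝ)^(d-1) := by positivity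
      constructor
      · calc c * (1+(j:ℝ))^(d-1) ≤ ((2:ℝ)^(d-1))⁻¹ * ((2:ℝ)^(d-1) * ((j:ℝ)^(d-1)+1)) :=
            mul_le_mul hcle (rmwc_pow_ub _ (Nat.cast_nonneg j)) (by positivity) (by positivity)
          _ = (j:ℝ)^(d-1)+1 := by field_simp
          _ ≤ (j:ℝ)^(d-1) + (k:ℝ)^(d-1) + 1 := by linarith
      · calc c * (1+(k:ℝ))^(d-1) ≤ ((2:ℝ)^(d-1))⁻¹ * ((2:ℝ)^(d-1) * ((k:ℝ)^(d-1)+1)) :=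
            mul_le_mul hcle (rmwc_pow_ub _ (Nat.cast_nonneg k)) (by positivity) (by positivity)
          _ = (k:ℝ)^(d-1)+1 := by field_simp
          _ ≤ (j:ℝ)^(d-1) + (k:ℝ)^(d-1) + 1 := by linarith
  obtain ⟨c, hc, hkeyf⟩ := hkey
  -- rpow comparison helper
  have hC2 : ∀ γ : ℝ, 0 ≤ γ → ∀ x m : ℝ, 1 ≤ x → 0 < m → c * x^(d-1) ≤ m →
      m ^ (-γ) ≤ c^(-γ) * x^(-(γ * ((d:ℝ)-1))) := by
    intro γ hγ x m hx hm hcm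
    have hx0 : (0:ℝ) < x := by linarith
    have h1 : m ^ (-γ) ≤ (c * x^(d-1)) ^ (-γ) :=
      Real.rpow_le_rpow_of_nonpos (by positivity) hcm (neg_nonpos.2 hγ)
    have h2 : (c * x^(d-1)) ^ (-γ) = c^(-γ) * x^(-(γ*((d:ℝ)-1))) := by
      rw [Real.mul_rpow hc.le (by positivity), ← Real.rpow_natCast x (d-1),
        ← Real.rpow_mul hx0.le, hdcast,
        show ((d:ℝ)-1) * (-γ) = -(γ*((d:ℝ)-1)) by ring]
    rw [h2] at h1
    exact h1
  -- ratio simplification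
  have hf : ∀ (j k : ℕ) (ℓ : ℤ),
      ((1+(k:ℝ))^t * μ (j,k,ℓ) ^ Q)/((1+(k:ℝ))^s * μ (j,k,ℓ)^P) =
        (1+(k:ℝ))^(t-s) * μ (j,k,ℓ)^(-(P-Q)) := by
    intro j k ℓ
    have hkpos : (0:ℝ) < 1 + k := by positivity
    have hμx := hμpos (j,k,ℓ)
    rw [mul_div_mul_comm, ← Real.rpow_sub hkpos, ← Real.rpow_sub hμx,
      show Q - P = -(P-Q) by ring]
  -- the general upper bound
  have hgen : ∀ γ₁ γ₂ : ℝ, 0 ≤ γ₁ → 0 ≤ γ₂ → γ₁ + γ₂ = P - Q →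
      ∀ x : {x : ℕ × ℕ × ℤ // |x.2.2| ≤ (N x.1 x.2.1 : ℤ)},
      ((1 + (x.1.2.1 : ℝ)) ^ t * μ x.1 ^ Q) / ((1 + (x.1.2.1 : ℝ)) ^ s * μ x.1 ^ P) ≤
        c ^ (-(P-Q)) * ((1 + (x.1.1 : ℝ)) ^ (-(γ₂ * ((d:ℝ)-1))) *
          (1 + (x.1.2.1 : ℝ)) ^ (t - s - γ₁ * ((d:ℝ)-1))) := by
    intro γ₁ γ₂ hγ₁ hγ₂ hγ x
    obtain ⟨⟨j, k, ℓ⟩, hx⟩ := x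
    simp only
    have hkpos : (0:ℝ) < 1 + k := by positivity
    have hjpos : (0:ℝ) < 1 + j := by positivity
    have hk1 : (1:ℝ) ≤ 1 + k := by
      have : (0:ℝ) ≤ (k:ℝ) := Nat.cast_nonneg k
      linarith
    have hj1 : (1:ℝ) ≤ 1 + j := by
      have : (0:ℝ) ≤ (j:ℝ) := Nat.cast_nonneg j
      linarith
    have hμx := hμpos (j,k,ℓ)
    have h1 : μ (j,k,ℓ) ^ (-γ₁) ≤ c^(-γ₁) * (1+(k:ℝ))^(-(γ₁*((d:ℝ)-1))) :=
      hC2 γ₁ hγ₁ _ _ hk1 hμx (hkeyf j k ℓ hx).2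
    have h2 : μ (j,k,ℓ) ^ (-γ₂) ≤ c^(-γ₂) * (1+(j:ℝ))^(-(γ₂*((d:ℝ)-1))) :=
      hC2 γ₂ hγ₂ _ _ hj1 hμx (hkeyf j k ℓ hx).1
    have hsplit : μ (j,k,ℓ) ^ (-(P-Q)) = μ (j,k,ℓ)^(-γ₁) * μ (j,k,ℓ)^(-γ₂) := by
      rw [← Real.rpow_add hμx]; congr 1; linarith
    have e1 : c^(-γ₁)*c^(-γ₂) = c^(-(P-Q)) := by
      rw [← Real.rpow_add hc]; congr 1; linarith
    have e2 : (1+(k:ℝ))^(t-s) * (1+(k:ℝ))^(-(γ₁*((d:ℝ)-1))) =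
        (1+(k:ℝ))^(t-s-γ₁*((d:ℝ)-1)) := by
      rw [← Real.rpow_add hkpos]; congr 1; try ring
    rw [hf j k ℓ]
    calc (1+(k:ℝ))^(t-s) * μ (j,k,ℓ)^(-(P-Q))
        = (1+(k:ℝ))^(t-s) * (μ (j,k,ℓ)^(-γ₁) * μ (j,k,ℓ)^(-γ₂)) := by rw [hsplit]
      _ ≤ (1+(k:ℝ))^(t-s) * ((c^(-γ₁) * (1+(k:ℝ))^(-(γ₁*((d:ℝ)-1)))) *
          (c^(-γ₂) * (1+(j:ℝ))^(-(γ₂*((d:ℝ)-1))))) := by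
          refine mul_le_mul_of_nonneg_left ?_ (Real.rpow_nonneg hkpos.le _)
          exact mul_le_mul h1 h2 (Real.rpow_nonneg hμx.le _) (by positivity)
      _ = c ^ (-(P-Q)) * ((1+(j:ℝ))^(-(γ₂*((d:ℝ)-1))) * (1+(k:ℝ))^(t-s-γ₁*((d:ℝ)-1))) := by
          rw [← e1, ← e2]; ring
  -- lower bound along j = 0
  have hlow : ∀ k : ℕ, (1+(k:ℝ))^(t - s - (P-Q)*((d:ℝ)-1)) ≤
      ((1+(k:ℝ))^t * μ (0,k,0)^Q)/((1+(k:ℝ))^s * μ (0,k,0)^P) := by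
    intro k
    have hkpos : (0:ℝ) < 1 + k := by positivity
    have hμk : μ (0,k,0) = (k:ℝ)^(d-1) + 1 := by
      have h := hμend 0 k 0 (Or.inl (by simp [h0N]))
      simpa [zero_pow (show d-1 ≠ 0 by omega)] using h
    have h1 : μ (0,k,0) ≤ (1+(k:ℝ))^(d-1) := by
      rw [hμk]; exact rmwc_pow_lb (d-1) (by omega) (Nat.cast_nonneg k)
    have h2 : ((1+(k:ℝ))^(d-1) : ℝ) ^ (-(P-Q)) ≤ μ (0,k,0) ^ (-(P-Q)) :=
      Real.rpow_le_rpow_of_nonpos (hμpos _) h1 (neg_nonpos.2 hα0)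
    have h3 : ((1+(k:ℝ))^(d-1) : ℝ) ^ (-(P-Q)) = (1+(k:ℝ)) ^ (-((P-Q)*((d:ℝ)-1))) := by
      rw [← Real.rpow_natCast (1+(k:ℝ)) (d-1), ← Real.rpow_mul hkpos.le, hdcast]
      congr 1; ring
    calc (1+(k:ℝ))^(t-s-(P-Q)*((d:ℝ)-1))
        = (1+(k:ℝ))^(t-s) * (1+(k:ℝ))^(-((P-Q)*((d:ℝ)-1))) := by
          rw [← Real.rpow_add hkpos]; congr 1; try ring
      _ ≤ (1+(k:ℝ))^(t-s) * μ (0,k,0)^(-(P-Q)) := by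
          rw [← h3]
          exact mul_le_mul_of_nonneg_left h2 (Real.rpow_nonneg hkpos.le _)
      _ = ((1+(k:ℝ))^t * μ (0,k,0)^Q)/((1+(k:ℝ))^s * μ (0,k,0)^P) := (hf 0 k 0).symm
  constructor
  · constructor
    · -- bounded → t - s ≤ α(d-1)
      intro hbdd
      by_contra hts
      push_neg at hts
      obtain ⟨M, hM⟩ := hbdd
      have hMk : ∀ k : ℕ, (1+(k:ℝ))^(t - s - (P-Q)*((d:ℝ)-1)) ≤ M := by
        intro k
        refine le_trans (hlow k) ?_
        exact hM (Set.mem_range_self (⟨(0,k,0), by simp [h0N]⟩ :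
          {x : ℕ × ℕ × ℤ // |x.2.2| ≤ (N x.1 x.2.1 : ℤ)}))
      exact rmwc_unbdd (show 0 < t - s - (P-Q)*((d:ℝ)-1) by linarith) hMk
    · -- t - s ≤ α(d-1) → bounded
      intro hts
      refine ⟨c ^ (-(P-Q)), ?_⟩
      rintro y ⟨x, rfl⟩
      have hb := hgen (P-Q) 0 hα0 le_rfl (by ring) x
      have hkpos : (0:ℝ) < 1 + (x.1.2.1:ℝ) := by positivity
      have hk1 : (1:ℝ) ≤ 1 + (x.1.2.1:ℝ) := by
        have : (0:ℝ) ≤ (x.1.2.1:ℝ) := Nat.cast_nonneg _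
        linarith
      refine le_trans hb ?_
      have hA : (1 + (x.1.1 : ℝ)) ^ (-((0:ℝ) * ((d:ℝ)-1))) = 1 := by
        norm_num
      have hB : (1 + (x.1.2.1 : ℝ)) ^ (t - s - (P-Q) * ((d:ℝ)-1)) ≤ 1 :=
        Real.rpow_le_one_of_one_le_of_nonpos hk1 (by linarith)
      rw [hA, one_mul]
      calc c ^ (-(P-Q)) * (1 + (x.1.2.1 : ℝ)) ^ (t - s - (P-Q) * ((d:ℝ)-1))
          ≤ c ^ (-(P-Q)) * 1 :=
            mul_le_mul_of_nonneg_left hB (Real.rpow_nonneg hc.le _)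
        _ = c ^ (-(P-Q)) := mul_one _
  · constructor
    · -- c₀ → p < q ∧ strict inequality
      intro h
      constructor
      · by_contra hlt
        have hpeq : p = q := le_antisymm hpq (not_lt.1 hlt)
        have hPQ : P = Q := by rw [hPdef, hQdef, hpeq]
        refine Set.infinite_of_injective_forall_mem
          (f := fun j : ℕ => (⟨(j,0,0), by simp [hN0]⟩ :
            {x : ℕ × ℕ × ℤ // |x.2.2| ≤ (N x.1 x.2.1 : ℤ)})) ?_ ?_ (h 1 one_pos)
        · intro a b hab
          simpa using congrArg (fun z => z.1.1) hab
        · intro j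
          simp only [Set.mem_setOf_eq]
          have hμj := hμpos (j,0,0)
          have heq1 : ((1 + ((0:ℕ):ℝ)) ^ t * μ (j,0,0) ^ Q) /
              ((1 + ((0:ℕ):ℝ)) ^ s * μ (j,0,0) ^ P) = 1 := by
            rw [hPQ]
            simp only [Nat.cast_zero, add_zero, Real.one_rpow, one_mul]
            exact div_self (Real.rpow_pos_of_pos hμj _).ne'
          exact le_of_eq heq1.symm
      · by_contra hts
        push_neg at hts
        refine Set.infinite_of_injective_forall_mem
          (f := fun k : ℕ => (⟨(0,k,0), by simp [h0N]⟩ :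
            {x : ℕ × ℕ × ℤ // |x.2.2| ≤ (N x.1 x.2.1 : ℤ)})) ?_ ?_ (h 1 one_pos)
        · intro a b hab
          simpa using congrArg (fun z => z.1.2.1) hab
        · intro k
          simp only [Set.mem_setOf_eq]
          refine le_trans ?_ (hlow k)
          have hk1 : (1:ℝ) ≤ 1 + (k:ℝ) := by
            have : (0:ℝ) ≤ (k:ℝ) := Nat.cast_nonneg k
            linarith
          calc (1:ℝ) = (1+(k:ℝ))^(0:ℝ) := (Real.rpow_zero _).symm
            _ ≤ (1+(k:ℝ))^(t-s-(P-Q)*((d:ℝ)-1)) :=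
              Real.rpow_le_rpow_of_exponent_le hk1 (by linarith)
    · -- p < q ∧ strict → c₀
      rintro ⟨hplt, hts⟩ ε hε
      have hPQpos : 0 < P - Q :=
        sub_pos.2 ((ENNReal.toReal_lt_toReal hqinv_ne_top hpinv_ne_top).2
          (ENNReal.inv_lt_inv.2 hplt))
      have hapos : 0 < (P-Q) * ((d:ℝ)-1) := mul_pos hPQpos (by linarith)
      have hmaxlt : max (t-s) 0 < (P-Q)*((d:ℝ)-1) := max_lt hts hapos
      set θ := (max (t-s) 0 + (P-Q)*((d:ℝ)-1)) / (2*((P-Q)*((d:ℝ)-1))) with hθdef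
      have hmax0 : (0:ℝ) ≤ max (t-s) 0 := le_max_right _ _
      have hθpos : 0 < θ := div_pos (by linarith) (by linarith)
      have hθlt : θ < 1 := (div_lt_one (by linarith)).2 (by linarith)
      have hθa : t - s < θ * ((P-Q)*((d:ℝ)-1)) := by
        have h' : θ * ((P-Q)*((d:ℝ)-1)) = (max (t-s) 0 + (P-Q)*((d:ℝ)-1))/2 := by
          rw [hθdef]; field_simp
        rw [h']
        have := le_max_left (t-s) 0
        linarith
      have hγ₁ : 0 < (P-Q)*θ := mul_pos hPQpos hθpos
      have hγ₂ : 0 < (P-Q)*(1-θ) := mul_pos hPQpos (by linarith)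
      have he₁ : 0 < ((P-Q)*θ)*((d:ℝ)-1) - (t-s) := by nlinarith
      have he₂ : 0 < ((P-Q)*(1-θ))*((d:ℝ)-1) := mul_pos hγ₂ (by linarith)
      have hCpos : 0 < c ^ (-(P-Q)) := Real.rpow_pos_of_pos hc _
      obtain ⟨J, hJ⟩ := exists_nat_gt ((c ^ (-(P-Q))/ε) ^ (1/(((P-Q)*(1-θ))*((d:ℝ)-1))))
      obtain ⟨K, hK⟩ := exists_nat_gt ((c ^ (-(P-Q))/ε) ^ (1/((((P-Q)*θ)*((d:ℝ)-1)) - (t-s))))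
      have hRpos : 0 < c ^ (-(P-Q))/ε := div_pos hCpos hε
      -- bound on indices for elements of the set
      have hjk : ∀ x : {x : ℕ × ℕ × ℤ // |x.2.2| ≤ (N x.1 x.2.1 : ℤ)},
          ε ≤ ((1 + (x.1.2.1 : ℝ)) ^ t * μ x.1 ^ Q) /
            ((1 + (x.1.2.1 : ℝ)) ^ s * μ x.1 ^ P) → x.1.1 < J ∧ x.1.2.1 < K := by
        intro x hx
        have hb := hgen ((P-Q)*θ) ((P-Q)*(1-θ)) hγ₁.le hγ₂.le (by ring) x
        have hjpos : (0:ℝ) < 1 + (x.1.1:ℝ) := by positivity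
        have hkpos : (0:ℝ) < 1 + (x.1.2.1:ℝ) := by positivity
        have hj1 : (1:ℝ) ≤ 1 + (x.1.1:ℝ) := by
          have : (0:ℝ) ≤ (x.1.1:ℝ) := Nat.cast_nonneg _
          linarith
        have hk1 : (1:ℝ) ≤ 1 + (x.1.2.1:ℝ) := by
          have : (0:ℝ) ≤ (x.1.2.1:ℝ) := Nat.cast_nonneg _
          linarith
        constructor
        · -- bound j
          have hA : (1 + (x.1.2.1:ℝ)) ^ (t - s - ((P-Q)*θ) * ((d:ℝ)-1)) ≤ 1 :=
            Real.rpow_le_one_of_one_le_of_nonpos hk1 (by linarith)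
          have h6 : ε ≤ c ^ (-(P-Q)) * (1 + (x.1.1:ℝ)) ^ (-(((P-Q)*(1-θ)) * ((d:ℝ)-1))) := by
            refine le_trans (le_trans hx hb) ?_
            calc c ^ (-(P-Q)) * ((1 + (x.1.1:ℝ)) ^ (-(((P-Q)*(1-θ)) * ((d:ℝ)-1))) *
                  (1 + (x.1.2.1:ℝ)) ^ (t - s - ((P-Q)*θ) * ((d:ℝ)-1)))
                ≤ c ^ (-(P-Q)) * ((1 + (x.1.1:ℝ)) ^ (-(((P-Q)*(1-θ)) * ((d:ℝ)-1))) * 1) := by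
                  refine mul_le_mul_of_nonneg_left ?_ hCpos.le
                  exact mul_le_mul_of_nonneg_left hA (Real.rpow_nonneg hjpos.le _)
              _ = c ^ (-(P-Q)) * (1 + (x.1.1:ℝ)) ^ (-(((P-Q)*(1-θ)) * ((d:ℝ)-1))) := by
                  rw [mul_one]
          have h7 : (1 + (x.1.1:ℝ)) ^ (((P-Q)*(1-θ)) * ((d:ℝ)-1)) ≤ c ^ (-(P-Q))/ε := by
            rw [le_div_iff₀ hε]
            have h71 := mul_le_mul_of_nonneg_left h6
              (Real.rpow_nonneg hjpos.le (((P-Q)*(1-θ)) * ((d:ℝ)-1)))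
            calc (1 + (x.1.1:ℝ)) ^ (((P-Q)*(1-θ)) * ((d:ℝ)-1)) * ε
                ≤ (1 + (x.1.1:ℝ)) ^ (((P-Q)*(1-θ)) * ((d:ℝ)-1)) *
                  (c ^ (-(P-Q)) * (1 + (x.1.1:ℝ)) ^ (-(((P-Q)*(1-θ)) * ((d:ℝ)-1)))) := h71
              _ = c ^ (-(P-Q)) * ((1 + (x.1.1:ℝ)) ^ (((P-Q)*(1-θ)) * ((d:ℝ)-1)) *
                  (1 + (x.1.1:ℝ)) ^ (-(((P-Q)*(1-θ)) * ((d:ℝ)-1)))) := by ring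
              _ = c ^ (-(P-Q)) := by
                  rw [← Real.rpow_add hjpos]
                  norm_num
          have h8 := rmwc_le_rpow_inv he₂ hRpos h7 hjpos.le
          have h9 : (x.1.1:ℝ) < J := by linarith
          exact_mod_cast h9
        · -- bound k
          have hA : (1 + (x.1.1:ℝ)) ^ (-(((P-Q)*(1-θ)) * ((d:ℝ)-1))) ≤ 1 :=
            Real.rpow_le_one_of_one_le_of_nonpos hj1 (by linarith)
          have h6 : ε ≤ c ^ (-(P-Q)) * (1 + (x.1.2.1:ℝ)) ^ (-((((P-Q)*θ) * ((d:ℝ)-1)) - (t-s))) := by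
            refine le_trans (le_trans hx hb) ?_
            calc c ^ (-(P-Q)) * ((1 + (x.1.1:ℝ)) ^ (-(((P-Q)*(1-θ)) * ((d:ℝ)-1))) *
                  (1 + (x.1.2.1:ℝ)) ^ (t - s - ((P-Q)*θ) * ((d:ℝ)-1)))
                ≤ c ^ (-(P-Q)) * (1 * (1 + (x.1.2.1:ℝ)) ^ (t - s - ((P-Q)*θ) * ((d:ℝ)-1))) := by
                  refine mul_le_mul_of_nonneg_left ?_ hCpos.le
                  exact mul_le_mul_of_nonneg_right hA (Real.rpow_nonneg hkpos.le _)
              _ = c ^ (-(P-Q)) * (1 + (x.1.2.1:ℝ)) ^ (-((((P-Q)*θ) * ((d:ℝ)-1)) - (t-s))) := by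
                  rw [one_mul, show t - s - ((P-Q)*θ) * ((d:ℝ)-1) =
                    -((((P-Q)*θ) * ((d:ℝ)-1)) - (t-s)) by ring]
          have h7 : (1 + (x.1.2.1:ℝ)) ^ ((((P-Q)*θ) * ((d:ℝ)-1)) - (t-s)) ≤ c ^ (-(P-Q))/ε := by
            rw [le_div_iff₀ hε]
            have h71 := mul_le_mul_of_nonneg_left h6
              (Real.rpow_nonneg hkpos.le ((((P-Q)*θ) * ((d:ℝ)-1)) - (t-s)))
            calc (1 + (x.1.2.1:ℝ)) ^ ((((P-Q)*θ) * ((d:ℝ)-1)) - (t-s)) * ε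
                ≤ (1 + (x.1.2.1:ℝ)) ^ ((((P-Q)*θ) * ((d:ℝ)-1)) - (t-s)) *
                  (c ^ (-(P-Q)) * (1 + (x.1.2.1:ℝ)) ^ (-((((P-Q)*θ) * ((d:ℝ)-1)) - (t-s)))) := h71
              _ = c ^ (-(P-Q)) * ((1 + (x.1.2.1:ℝ)) ^ ((((P-Q)*θ) * ((d:ℝ)-1)) - (t-s)) *
                  (1 + (x.1.2.1:ℝ)) ^ (-((((P-Q)*θ) * ((d:ℝ)-1)) - (t-s)))) := by ring
              _ = c ^ (-(P-Q)) := by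
                  rw [← Real.rpow_add hkpos]
                  norm_num
          have h8 := rmwc_le_rpow_inv he₁ hRpos h7 hkpos.le
          have h9 : (x.1.2.1:ℝ) < K := by linarith
          exact_mod_cast h9
      -- conclude finiteness
      set Mz := ((Finset.range J) ×ˢ (Finset.range K)).sup (fun y : ℕ × ℕ => N y.1 y.2) with hMz
      refine Set.Finite.subset (Set.Finite.preimage (Subtype.val_injective.injOn)
        (Finset.finite_toSet ((Finset.range J) ×ˢ ((Finset.range K) ×ˢ
          (Finset.Icc (-(Mz:ℤ)) (Mz:ℤ)))))) ?_
      intro x hx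
      simp only [Set.mem_setOf_eq] at hx
      obtain ⟨hj, hk⟩ := hjk x hx
      have hmem : x.1 ∈ ((Finset.range J) ×ˢ ((Finset.range K) ×ˢ
          (Finset.Icc (-(Mz:ℤ)) (Mz:ℤ)))) := by
        rw [Finset.mem_product, Finset.mem_product, Finset.mem_range, Finset.mem_range,
          Finset.mem_Icc]
        refine ⟨hj, hk, ?_, ?_⟩
        · have hsup : N x.1.1 x.1.2.1 ≤ Mz := by
            rw [hMz]
            exact Finset.le_sup (f := fun y : ℕ × ℕ => N y.1 y.2)
              (s := (Finset.range J) ×ˢ (Finset.range K)) (b := (x.1.1, x.1.2.1))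
              (by simp only [Finset.mem_product, Finset.mem_range]; exact ⟨hj, hk⟩)
          have hsup' : (N x.1.1 x.1.2.1 : ℤ) ≤ (Mz:ℤ) := by exact_mod_cast hsup
          have habs := abs_le.1 x.2
          linarith [habs.1]
        · have hsup : N x.1.1 x.1.2.1 ≤ Mz := by
            rw [hMz]
            exact Finset.le_sup (f := fun y : ℕ × ℕ => N y.1 y.2)
              (s := (Finset.range J) ×ˢ (Finset.range K)) (b := (x.1.1, x.1.2.1))
              (by simp only [Finset.mem_product, Finset.mem_range]; exact ⟨hj, hk⟩)
          have hsup' : (N x.1.1 x.1.2.1 : ℤ) ≤ (Mz:ℤ) := by exact_mod_cast hsup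
          have habs := abs_le.1 x.2
          linarith [habs.2]
      exact hmem
end

section
/- Let G be a locally compact group and A a compact automorphism group of G acting continuously. Let X = (x_i)_{i ∈ I} be a family in G that is relatively separated with respect to A, i.e., for every compact W ⊂ G, sup_{j} #{i : A(x_i W) ∩ A(x_j W) ≠ ∅} < ∞, where A(S) = {α(s) : α ∈ A, s ∈ S}. Then for any compact set K = K^{-1} = A(K) there is a finite partition I = I_1 ∪ ⋯ ∪ I_s such that each subfamily (x_i)_{i ∈ I_r} is K-A-separated, meaning A(x_i K) ∩ A(x_j K) = ∅ for all i ≠ j in I_r. -/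
/-!
Join two indices when their `A`-orbits of translates of `K₀` meet. Relative separatedness,
applied to `W = K₀`, bounds every degree of this intersection graph by some `M`; a graph of
degree at most `M` is `(M + 1)`-colourable (greedily on finite subgraphs, and then on the whole
graph by the de Bruijn–Erdős compactness theorem), and the colour classes are the required
`K₀`-`A`-separated subfamilies.
-/

open Pointwise
/-- The `A`-orbit `A(S) = {α(s) : α ∈ A, s ∈ S}` of a set `S ⊆ G` under an automorphism
group action `φ : K →* MulAut G`. -/
def orbitSet {G K : Type*} [Group G] [Group K] (φ : K →* MulAut G) (S : Set G) : Set G :=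
  ⋃ k : K, (φ k) '' S

namespace SimpleGraph

variable {V : Type*} {G : SimpleGraph V} {M : ℕ}

theorem exists_fin_notMem_of_encard_le {T : Set (Fin (M + 1))} (hT : T.encard ≤ M) :
    ∃ a, a ∉ T := by
  by_contra! hall
  have : ((M + 1 : ℕ) : ℕ∞) ≤ M := by
    simpa [Set.eq_univ_of_forall hall] using hT
  exact absurd (ENat.natCast_le_natCast.mp this) (by omega)

theorem exists_coloring_adj_ne_on_finset (h : ∀ v, (G.neighborSet v).encard ≤ M)
    (s : Finset V) : ∃ c : V → Fin (M + 1), ∀ u ∈ s, ∀ w ∈ s, G.Adj u w → c u ≠ c w := by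
  classical
  induction s using Finset.induction with
  | empty => exact ⟨fun _ => 0, by simp⟩
  | @insert v s hv ih =>
    obtain ⟨c, hc⟩ := ih
    obtain ⟨a, ha⟩ := exists_fin_notMem_of_encard_le <|
      calc (c '' (G.neighborSet v ∩ s)).encard ≤ (G.neighborSet v ∩ s).encard :=
            Set.encard_image_le _ _
        _ ≤ (G.neighborSet v).encard := Set.encard_le_encard Set.inter_subset_left
        _ ≤ M := h v
    have hfresh : ∀ u ∈ s, G.Adj v u → c u ≠ a := fun u hu hvu hcu => ha ⟨u, ⟨hvu, hu⟩, hcu⟩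
    have hne : ∀ u ∈ s, u ≠ v := fun u hu huv => hv (huv ▸ hu)
    refine ⟨Function.update c v a, ?_⟩
    intro x hx' y hy' hxy
    rcases Finset.mem_insert.mp hx' with rfl | hx <;>
      rcases Finset.mem_insert.mp hy' with rfl | hy
    · exact absurd hxy G.irrefl
    · simpa [Function.update_of_ne (hne y hy)] using (hfresh y hy hxy).symm
    · simpa [Function.update_of_ne (hne x hx)] using hfresh x hx hxy.symm
    · simpa [Function.update_of_ne (hne x hx), Function.update_of_ne (hne y hy)] using
        hc x hx y hy hxy

theorem colorable_of_encard_neighborSet_le (h : ∀ v, (G.neighborSet v).encard ≤ M) :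
    G.Colorable (M + 1) := by
  refine nonempty_hom_of_forall_finite_subgraph_hom fun G' hG' => ?_
  choose c hc using exists_coloring_adj_ne_on_finset h hG'.toFinset
  exact ⟨fun v => c v, fun {u w} huw =>
    hc u (hG'.mem_toFinset.mpr u.2) w (hG'.mem_toFinset.mpr w.2) (G'.coe_adj_sub u w huw)⟩

end SimpleGraph

section IntersectionGraph

variable {G K I : Type*} [Group G] [Group K]

def orbitIntersectionGraph (φ : K →* MulAut G) (X : I → G) (W : Set G) : SimpleGraph I where
  Adj i j := i ≠ j ∧ (orbitSet φ (X i • W) ∩ orbitSet φ (X j • W)).Nonempty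
  symm := ⟨fun _ _ h => ⟨h.1.symm, Set.inter_comm .. ▸ h.2⟩⟩
  loopless := ⟨fun _ h => h.1 rfl⟩

theorem encard_neighborSet_orbitIntersectionGraph_le {φ : K →* MulAut G} {X : I → G}
    {W : Set G} {M : ℕ} {j : I}
    (hfin : {i : I | (orbitSet φ (X i • W) ∩ orbitSet φ (X j • W)).Nonempty}.Finite)
    (hcard : hfin.toFinset.card ≤ M) :
    ((orbitIntersectionGraph φ X W).neighborSet j).encard ≤ M :=
  calc _ ≤ {i : I | (orbitSet φ (X i • W) ∩ orbitSet φ (X j • W)).Nonempty}.encard :=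
        Set.encard_le_encard fun _ hi => by rw [Set.mem_ofPred_eq, Set.inter_comm]; exact hi.2
    _ ≤ M := by rw [hfin.encard_eq_coe_toFinset_card]; exact_mod_cast hcard

end IntersectionGraph

theorem relatively_separated_partition_general
    {G : Type*} [Group G] [TopologicalSpace G]
    {K : Type*} [Group K]
    (φ : K →* MulAut G)
    {I : Type*} (X : I → G)
    (hsep : ∀ W : Set G, IsCompact W → ∃ M : ℕ, ∀ j : I,
      ∃ hfin : {i : I | (orbitSet φ (X i • W) ∩ orbitSet φ (X j • W)).Nonempty}.Finite,
        hfin.toFinset.card ≤ M) :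
    ∀ K₀ : Set G, IsCompact K₀ → K₀⁻¹ = K₀ → orbitSet φ K₀ = K₀ →
      ∃ (s : ℕ) (P : I → Fin s), ∀ i j : I, i ≠ j → P i = P j →
        orbitSet φ (X i • K₀) ∩ orbitSet φ (X j • K₀) = ∅ := by
  intro K₀ hK₀ _ _
  obtain ⟨M, hM⟩ := hsep K₀ hK₀
  obtain ⟨C⟩ : (orbitIntersectionGraph φ X K₀).Colorable (M + 1) :=
    SimpleGraph.colorable_of_encard_neighborSet_le fun j =>
      encard_neighborSet_orbitIntersectionGraph_le (hM j).1 (hM j).2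
  refine ⟨M + 1, C, fun i j hij hC => Set.not_nonempty_iff_eq_empty.mp fun hmeet => ?_⟩
  exact C.valid (G := orbitIntersectionGraph φ X K₀) ⟨hij, hmeet⟩ hC

/-- Let `G` be a locally compact group and `K` a compact group acting
continuously on `G` by automorphisms. If `X = (x_i)_{i∈I}` is relatively separated with
respect to the action (for every compact `W`, each orbit `A(x_j W)` meets at most `M` of
the orbits `A(x_i W)`), then for every compact `K₀ = K₀⁻¹ = A(K₀)` there is a finite
partition `I = I_1 ∪ ⋯ ∪ I_s` (a coloring `P : I → Fin s`) such that each subfamily is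
`K₀`-`A`-separated: `A(x_i K₀) ∩ A(x_j K₀) = ∅` for `i ≠ j` of the same color. -/
theorem relatively_separated_partition
    {G : Type*} [Group G] [TopologicalSpace G] [IsTopologicalGroup G] [LocallyCompactSpace G]
    {K : Type*} [Group K] [TopologicalSpace K] [IsTopologicalGroup K] [CompactSpace K]
    (φ : K →* MulAut G) (hcont : Continuous fun p : G × K => φ p.2 p.1)
    {I : Type*} (X : I → G)
    (hsep : ∀ W : Set G, IsCompact W → ∃ M : ℕ, ∀ j : I,
      ∃ hfin : {i : I | (orbitSet φ (X i • W) ∩ orbitSet φ (X j • W)).Nonempty}.Finite,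
        hfin.toFinset.card ≤ M) :
    ∀ K₀ : Set G, IsCompact K₀ → K₀⁻¹ = K₀ → orbitSet φ K₀ = K₀ →
      ∃ (s : ℕ) (P : I → Fin s), ∀ i j : I, i ≠ j → P i = P j →
        orbitSet φ (X i • K₀) ∩ orbitSet φ (X j • K₀) = ∅ :=
  relatively_separated_partition_general φ X hsep
end

section
/- Let E, F be Banach spaces with E ⊂ F, and suppose there exist Banach sequence spaces Y♭, Z♭, bounded operators A : E → Y♭ and Ω : Y♭ → E with Ω ∘ A = Id_E (E is a retract of Y♭), and bounded operators Â : Z♭ → ⊕_{r=1}^s F and B̂ : ⊕_{r=1}^s F → Z♭ with B̂ ∘ Â = Id_{Z♭} (Z♭ is a retract of a finite direct sum of copies of F). If moreover Y♭ ⊂ Z♭ boundedly and the inclusion Y♭ ↪ Z♭ is compact, then the inclusion E ↪ F is compact; conversely if E ↪ F is compact and the corresponding compatibility diagrams commute (A extends the coefficient map on F and Ω extends the synthesis map on Z♭), then Y♭ ↪ Z♭ is compact. More generally, membership of the two inclusion maps in any operator ideal 𝒥 is equivalent. -/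
universe u

section aux

variable {E F : Type*} [NormedAddCommGroup E] [NormedSpace ℝ E]
  [NormedAddCommGroup F] [NormedSpace ℝ F]

/-- coordinate inclusion into a finite power -/
def coordIncl (s : ℕ) (r : Fin s) : F →L[ℝ] (Fin s → F) :=
  ContinuousLinearMap.pi fun j => if j = r then ContinuousLinearMap.id ℝ F else 0

lemma coordIncl_apply (s : ℕ) (r j : Fin s) (v : F) :
    coordIncl s r v j = if j = r then v else 0 := by
  by_cases h : j = r <;> simp [coordIncl, h]

lemma isCompactOperator_finset_sum {ι' : Type*} (t : Finset ι') (f : ι' → (E →L[ℝ] F))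
    (h : ∀ i ∈ t, IsCompactOperator (f i)) :
    IsCompactOperator (⇑(∑ i ∈ t, f i)) := by
  classical
  induction t using Finset.induction_on with
  | empty => simpa using isCompactOperator_zero
  | @insert a t' hnot ih =>
    rw [Finset.sum_insert hnot]
    have h1 : IsCompactOperator (f a) := h a (Finset.mem_insert_self a t')
    have h2 : IsCompactOperator (⇑(∑ i ∈ t', f i)) :=
      ih fun i hi => h i (Finset.mem_insert_of_mem hi)
    have h3 := h1.add h2
    exact h3

end aux

/-- Suppose `E` is a retract of `Y` (via `A : E → Y`, `Ω : Y → E`,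
`Ω ∘ A = Id`), `Z` is a retract of a finite direct sum `⊕_{r<s} F` (via `Â, B̂` with
`B̂ ∘ Â = Id`), and the inclusions `ι : Y → Z` and `ιEF : E → F` are compatible:
`ιEF = Ω_F ∘ ι ∘ A` and `ι = B̂ ∘ (ιEF applied componentwise) ∘ Â`. Then `ιEF` is compact
iff `ι` is compact, and more generally, for any operator ideal `𝒥`, `ιEF ∈ 𝒥` iff
`ι ∈ 𝒥`. -/
theorem retract_transfer_operator_ideal
    (𝒥 : ∀ (E F : Type u) [NormedAddCommGroup E] [NormedSpace ℝ E]
      [NormedAddCommGroup F] [NormedSpace ℝ F], Set (E →L[ℝ] F))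
    (hJ_id : (ContinuousLinearMap.id ℝ (ULift.{u} ℝ)) ∈ 𝒥 (ULift ℝ) (ULift ℝ))
    (hJ_add : ∀ (E F : Type u) [NormedAddCommGroup E] [NormedSpace ℝ E]
      [NormedAddCommGroup F] [NormedSpace ℝ F] (S₁ S₂ : E →L[ℝ] F),
      S₁ ∈ 𝒥 E F → S₂ ∈ 𝒥 E F → S₁ + S₂ ∈ 𝒥 E F)
    (hJ_comp : ∀ (E₀ E F F₀ : Type u)
      [NormedAddCommGroup E₀] [NormedSpace ℝ E₀] [NormedAddCommGroup E] [NormedSpace ℝ E]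
      [NormedAddCommGroup F] [NormedSpace ℝ F] [NormedAddCommGroup F₀] [NormedSpace ℝ F₀]
      (T : E₀ →L[ℝ] E) (S : E →L[ℝ] F) (R : F →L[ℝ] F₀),
      S ∈ 𝒥 E F → (R.comp (S.comp T)) ∈ 𝒥 E₀ F₀)
    (E F Y Z : Type u)
    [NormedAddCommGroup E] [NormedSpace ℝ E] [CompleteSpace E]
    [NormedAddCommGroup F] [NormedSpace ℝ F] [CompleteSpace F]
    [NormedAddCommGroup Y] [NormedSpace ℝ Y] [CompleteSpace Y]
    [NormedAddCommGroup Z] [NormedSpace ℝ Z] [CompleteSpace Z]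
    (A : E →L[ℝ] Y) (Om : Y →L[ℝ] E) (hretr : Om.comp A = ContinuousLinearMap.id ℝ E)
    (s : ℕ) (Ahat : Y →L[ℝ] (Fin s → E)) (Bhat : (Fin s → F) →L[ℝ] Z)
    (AhatZ : Z →L[ℝ] (Fin s → F))
    (hretrZ : Bhat.comp AhatZ = ContinuousLinearMap.id ℝ Z)
    (OmF : Z →L[ℝ] F)
    (ι : Y →L[ℝ] Z) (ιEF : E →L[ℝ] F)
    (hfac1 : ιEF = OmF.comp (ι.comp A))
    (hfac2 : ι = Bhat.comp
      ((ContinuousLinearMap.pi fun r : Fin s =>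
        ιEF.comp (ContinuousLinearMap.proj r)).comp Ahat))
    :
    (IsCompactOperator ιEF ↔ IsCompactOperator ι) ∧
    (ιEF ∈ 𝒥 E F ↔ ι ∈ 𝒥 Y Z) := by
  classical
  -- the sum decomposition of ι
  have hsum : ι = ∑ r : Fin s,
      (Bhat.comp (coordIncl s r)).comp (ιEF.comp ((ContinuousLinearMap.proj r).comp Ahat)) := by
    ext y
    rw [hfac2]
    simp only [ContinuousLinearMap.sum_apply, ContinuousLinearMap.comp_apply]
    rw [← map_sum Bhat]
    congr 1
    ext j
    simp [Finset.sum_apply, coordIncl_apply, ContinuousLinearMap.pi_apply]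
  constructor
  · constructor
    · intro h
      rw [hsum]
      apply isCompactOperator_finset_sum
      intro r _
      have h1 : IsCompactOperator
          (⇑ιEF ∘ ⇑((ContinuousLinearMap.proj r : (Fin s → E) →L[ℝ] E).comp Ahat)) :=
        h.comp_clm _
      exact h1.continuous_comp (Bhat.comp (coordIncl s r)).continuous
    · intro h
      rw [hfac1]
      have h1 : IsCompactOperator (⇑ι ∘ ⇑A) := h.comp_clm A
      exact h1.continuous_comp OmF.continuous
  · constructor
    · intro h
      rw [hsum]
      -- zero is in the ideal
      have hzero : ∀ (E' F' : Type u) [NormedAddCommGroup E'] [NormedSpace ℝ E']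
          [NormedAddCommGroup F'] [NormedSpace ℝ F'], (0 : E' →L[ℝ] F') ∈ 𝒥 E' F' := by
        intro E' F' _ _ _ _
        have := hJ_comp E' (ULift ℝ) (ULift ℝ) F' 0 (ContinuousLinearMap.id ℝ (ULift ℝ)) 0 hJ_id
        simpa using this
      have hmem : ∀ r : Fin s,
          (Bhat.comp (coordIncl s r)).comp (ιEF.comp ((ContinuousLinearMap.proj r).comp Ahat))
            ∈ 𝒥 Y Z := fun r =>
        hJ_comp Y E F Z ((ContinuousLinearMap.proj r).comp Ahat) ιEF
          (Bhat.comp (coordIncl s r)) h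
      refine Finset.sum_induction _ (fun T => T ∈ 𝒥 Y Z) (fun a b ha hb => hJ_add Y Z a b ha hb)
        (hzero Y Z) fun r _ => hmem r
    · intro h
      rw [hfac1]
      exact hJ_comp E Y Z F A ι OmF h
end
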